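/- arXiv:1710.05138 — 9 statements merged into one kernel-verified Lean document; each statement's English description precedes it below -/
import Mathlib

section
/- Let Λ be a finite distributive lattice and let A₀ ⊆ A₁, A₂ be finite Λ-ultrametric spaces with A_i = A₀ ∪ {a_i} for i = 1,2 (two-point amalgamation problem). Define d(a₁,a₂) = ⋀_{b ∈ A₀} (d(a₁,b) ⊔ d(a₂,b)). Then the resulting function d on A₀ ∪ {a₁,a₂} satisfies the ultrametric triangle inequality d(x,z) ≤ d(x,y) ⊔ d(y,z) for all points x,y,z. -/
/-!
Only triples containing both new points `a₁`, `a₂` and a third point `b` of `A₀` are not covered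
by the ultrametric structures of `A₁` and `A₂`. The inequality `d(a₁,a₂) ≤ d(a₁,b) ⊔ d(b,a₂)`
holds because `b` is one of the terms of the meet. For `d(a₁,b) ≤ d(a₁,a₂) ⊔ d(a₂,b)`,
distributivity turns the right-hand side into the meet over `c ∈ A₀` of
`d(a₁,c) ⊔ d(a₂,c) ⊔ d(a₂,b)`, and each of these bounds `d(a₁,b)` through the path
`a₁ → c → a₂ → b`, using the triangle inequality in `A₁` and then in `A₂`; the bound on
`d(a₂,b)` is symmetric.
-/

theorem Finset.le_inf_sup_sup_of_le {ι Λ : Type*} [DistribLattice Λ] [OrderTop Λ]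
    {s : Finset ι} {f g h : ι → Λ} {a c : Λ} (hf : ∀ i ∈ s, a ≤ f i ⊔ h i)
    (hh : ∀ i ∈ s, h i ≤ g i ⊔ c) : a ≤ s.inf (fun i => f i ⊔ g i) ⊔ c := by
  rw [Finset.inf_sup_distrib_right, Finset.le_inf_iff]
  intro i hi
  calc a ≤ f i ⊔ h i := hf i hi
    _ ≤ f i ⊔ (g i ⊔ c) := sup_le_sup_left (hh i hi) _
    _ = f i ⊔ g i ⊔ c := (sup_assoc ..).symm

section Amalgamation

variable {ι α Λ : Type*}

theorem triangle_of_triangle_off_points [SemilatticeSup Λ] [OrderBot Λ] {d : α → α → Λ}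
    {p q : α} (hpq : p ≠ q) (hsymm : ∀ x y, d x y = d y x) (hrefl : ∀ x, d x x = ⊥)
    (hoff_q : ∀ x y z, x ≠ q → y ≠ q → z ≠ q → d x z ≤ d x y ⊔ d y z)
    (hoff_p : ∀ x y z, x ≠ p → y ≠ p → z ≠ p → d x z ≤ d x y ⊔ d y z)
    (hmid : ∀ b, b ≠ p → b ≠ q → d p q ≤ d p b ⊔ d b q)
    (hp : ∀ b, b ≠ p → b ≠ q → d p b ≤ d p q ⊔ d q b)
    (hq : ∀ b, b ≠ p → b ≠ q → d q b ≤ d q p ⊔ d p b) :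
    ∀ x y z, d x z ≤ d x y ⊔ d y z := by
  have hrev : ∀ x y z, d z x ≤ d z y ⊔ d y x → d x z ≤ d x y ⊔ d y z := fun x y z h => by
    rwa [hsymm x z, hsymm x y, hsymm y z, sup_comm]
  intro x y z
  by_cases hxz : x = z
  · simp [hxz, hrefl]
  by_cases hyx : y = x
  · exact hyx ▸ le_sup_right
  by_cases hyz : y = z
  · exact hyz ▸ le_sup_left
  by_cases hq' : x ≠ q ∧ y ≠ q ∧ z ≠ q
  · exact hoff_q x y z hq'.1 hq'.2.1 hq'.2.2
  by_cases hp' : x ≠ p ∧ y ≠ p ∧ z ≠ p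
  · exact hoff_p x y z hp'.1 hp'.2.1 hp'.2.2
  have hq_mem : q = x ∨ q = y ∨ q = z := by tauto
  have hp_mem : p = x ∨ p = y ∨ p = z := by tauto
  -- the surviving triples are (q,p,z), (q,y,p), (p,q,z), (x,q,p), (p,y,q) and (x,p,q)
  rcases hq_mem with rfl | rfl | rfl <;> rcases hp_mem with rfl | rfl | rfl
  · contradiction
  · exact hq z (Ne.symm hyz) (Ne.symm hxz)
  · exact hrev _ _ _ (hmid y hyz hyx)
  · exact hp z (Ne.symm hxz) (Ne.symm hyz)
  · contradiction
  · exact hrev _ _ _ (hp x hxz (Ne.symm hyx))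
  · exact hmid y hyx hyz
  · exact hrev _ _ _ (hq x (Ne.symm hyx) hxz)
  · contradiction

section PreCanonical

variable [DistribLattice Λ] [OrderTop Λ]

def preCanonicalDist (d : α → α → Λ) (e : ι → α) (s : Finset ι) (p q : α) : Λ :=
  s.inf fun i => d p (e i) ⊔ d q (e i)

variable {d : α → α → Λ} {e : ι → α} {s : Finset ι}

theorem preCanonicalDist_comm (p q : α) :
    preCanonicalDist d e s p q = preCanonicalDist d e s q p := by
  simp only [preCanonicalDist, sup_comm]

theorem preCanonicalDist_le {i : ι} (hi : i ∈ s) {p q : α} :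
    preCanonicalDist d e s p q ≤ d p (e i) ⊔ d q (e i) :=
  Finset.inf_le (f := fun i => d p (e i) ⊔ d q (e i)) hi

theorem le_preCanonicalDist_sup (hsymm : ∀ x y, d x y = d y x) {p q y : α}
    (hp : ∀ i ∈ s, d p y ≤ d p (e i) ⊔ d (e i) y)
    (hq : ∀ i ∈ s, d (e i) y ≤ d (e i) q ⊔ d q y) :
    d p y ≤ preCanonicalDist d e s p q ⊔ d q y :=
  Finset.le_inf_sup_sup_of_le hp fun i hi => hsymm q (e i) ▸ hq i hi

end PreCanonical

end Amalgamation

theorem stmt2_general {Λ A₀ : Type*} [DistribLattice Λ] [BoundedOrder Λ]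
    [Fintype A₀]
    (d : (A₀ ⊕ Bool) → (A₀ ⊕ Bool) → Λ)
    (hsymm : ∀ x y, d x y = d y x)
    (hrefl : ∀ x, d x x = ⊥)
    -- triangle inequality within A₁ = A₀ ∪ {a₁}
    (htri1 : ∀ x y z : A₀ ⊕ Bool, x ≠ Sum.inr true → y ≠ Sum.inr true →
      z ≠ Sum.inr true → d x z ≤ d x y ⊔ d y z)
    -- triangle inequality within A₂ = A₀ ∪ {a₂}
    (htri2 : ∀ x y z : A₀ ⊕ Bool, x ≠ Sum.inr false → y ≠ Sum.inr false →
      z ≠ Sum.inr false → d x z ≤ d x y ⊔ d y z)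
    -- pre-canonical amalgamation: d(a₁,a₂) = ⋀_{b ∈ A₀} (d(a₁,b) ⊔ d(a₂,b))
    (hpc : d (Sum.inr false) (Sum.inr true) =
      (Finset.univ : Finset A₀).inf
        (fun b => d (Sum.inr false) (Sum.inl b) ⊔ d (Sum.inr true) (Sum.inl b))) :
    ∀ x y z : A₀ ⊕ Bool, d x z ≤ d x y ⊔ d y z := by
  change d _ _ = preCanonicalDist d Sum.inl Finset.univ _ _ at hpc
  have hbase : ∀ b : A₀ ⊕ Bool, b ≠ Sum.inr false → b ≠ Sum.inr true → ∃ i, b = Sum.inl i := by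
    rintro (i | _ | _) h₁ h₂
    exacts [⟨i, rfl⟩, (h₁ rfl).elim, (h₂ rfl).elim]
  refine triangle_of_triangle_off_points (by simp) hsymm hrefl htri1 htri2 ?_ ?_ ?_ <;>
    intro b hb₁ hb₂ <;> obtain ⟨i, rfl⟩ := hbase b hb₁ hb₂
  · rw [hpc, hsymm _ (Sum.inr true)]
    exact preCanonicalDist_le (Finset.mem_univ i)
  · rw [hpc]
    exact le_preCanonicalDist_sup hsymm (fun j _ => htri1 _ _ _ (by simp) (by simp) (by simp))
      (fun j _ => htri2 _ _ _ (by simp) (by simp) (by simp))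
  · rw [hsymm _ (Sum.inr false), hpc, preCanonicalDist_comm]
    exact le_preCanonicalDist_sup hsymm (fun j _ => htri2 _ _ _ (by simp) (by simp) (by simp))
      (fun j _ => htri1 _ _ _ (by simp) (by simp) (by simp))

/-- Pre-canonical amalgamation of a two-point amalgamation problem of
finite `Λ`-ultrametric spaces over a finite distributive lattice `Λ` satisfies the
ultrametric triangle inequality.  The universe is `A₀ ⊕ Bool`, where `Sum.inl b`
ranges over the base `A₀`, `Sum.inr false = a₁` and `Sum.inr true = a₂`. -/
theorem stmt2 {Λ A₀ : Type*} [DistribLattice Λ] [BoundedOrder Λ] [Fintype Λ]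
    [Fintype A₀]
    (d : (A₀ ⊕ Bool) → (A₀ ⊕ Bool) → Λ)
    (hsymm : ∀ x y, d x y = d y x)
    (hrefl : ∀ x, d x x = ⊥)
    -- triangle inequality within A₁ = A₀ ∪ {a₁}
    (htri1 : ∀ x y z : A₀ ⊕ Bool, x ≠ Sum.inr true → y ≠ Sum.inr true →
      z ≠ Sum.inr true → d x z ≤ d x y ⊔ d y z)
    -- triangle inequality within A₂ = A₀ ∪ {a₂}
    (htri2 : ∀ x y z : A₀ ⊕ Bool, x ≠ Sum.inr false → y ≠ Sum.inr false →
      z ≠ Sum.inr false → d x z ≤ d x y ⊔ d y z)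
    -- pre-canonical amalgamation: d(a₁,a₂) = ⋀_{b ∈ A₀} (d(a₁,b) ⊔ d(a₂,b))
    (hpc : d (Sum.inr false) (Sum.inr true) =
      (Finset.univ : Finset A₀).inf
        (fun b => d (Sum.inr false) (Sum.inl b) ⊔ d (Sum.inr true) (Sum.inl b))) :
    ∀ x y z : A₀ ⊕ Bool, d x z ≤ d x y ⊔ d y z :=
  stmt2_general d hsymm hrefl htri1 htri2 hpc
end

section
/- Let Λ be a finite distributive lattice and E ∈ Λ meet-irreducible. If A₀ is a finite Λ-ultrametric space, a₁, a₂ are two extension points with d(a_i, b) given for b ∈ A₀, and the pre-canonical amalgamation value d(a₁,a₂) = ⋀_{b ∈ A₀}(d(a₁,b) ⊔ d(a₂,b)) satisfies d(a₁,a₂) ≤ E, then there exists b ∈ A₀ with d(a₁,b) ≤ E and d(a₂,b) ≤ E. -/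
theorem stmt3_general {Λ A₀ : Type*} [DistribLattice Λ] [BoundedOrder Λ]
    [Fintype A₀] [Nonempty A₀]
    (E : Λ) (hirr : ∀ x y : Λ, E = x ⊓ y → E = x ∨ E = y)
    (d₁ d₂ : A₀ → Λ)
    (h : (Finset.univ : Finset A₀).inf (fun b => d₁ b ⊔ d₂ b) ≤ E) :
    ∃ b : A₀, d₁ b ≤ E ∧ d₂ b ≤ E := by
  by_cases hE : IsMax E
  · simp [hE.eq_top]
  have hprime : InfPrime E :=
    InfIrred.infPrime ⟨hE, fun x y hxy => (hirr x y hxy.symm).imp Eq.symm Eq.symm⟩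
  obtain ⟨b, -, hb⟩ := hprime.finset_inf_le.1 h
  exact ⟨b, sup_le_iff.1 hb⟩

/-- If `E` is meet-irreducible in a finite distributive lattice `Λ` and
the pre-canonical amalgamation value `⋀_{b ∈ A₀} (d(a₁,b) ⊔ d(a₂,b))` is `≤ E`,
then some base point `b` satisfies `d(a₁,b) ≤ E` and `d(a₂,b) ≤ E`.
Here `d₁ b = d(a₁,b)` and `d₂ b = d(a₂,b)`. -/
theorem stmt3 {Λ A₀ : Type*} [DistribLattice Λ] [BoundedOrder Λ] [Fintype Λ]
    [Fintype A₀] [Nonempty A₀]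
    (E : Λ) (hirr : ∀ x y : Λ, E = x ⊓ y → E = x ∨ E = y)
    (d₁ d₂ : A₀ → Λ)
    (h : (Finset.univ : Finset A₀).inf (fun b => d₁ b ⊔ d₂ b) ≤ E) :
    ∃ b : A₀, d₁ b ≤ E ∧ d₂ b ≤ E :=
  stmt3_general E hirr d₁ d₂ h
end

section
/- Let Γ be a structure with three linear orders <₁, <₂, <₃ such that the relation p₀(x,y) given by (x <₁ y ∧ x <₂ y ∧ x <₃ y) and the relations p_i(x,y) given by (y <_i x and x <_j y for the other two indices j) are all realized, and such that Γ contains every finite structure in which all three relations are linear orders (i.e. Γ is the generic 3-dimensional permutation structure). Then any definable linear order < on Γ that is a union of 2-types must equal <_i or the reverse of <_i for some i ∈ {1,2,3}. Specifically: if < contains the 2-type x <₁ y ∧ x <₂ y ∧ x <₃ y and for each i contains some 2-type implying y <_i x, then < fails transitivity on some finite configuration realizable in Γ. -/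
/-!
Record the 2-type of a pair `(x, y)` as the vector `i ↦ (x <ᵢ y)` of truth values. An invariant
linear order `<` is then the same thing as a set `S` of 2-types that contains exactly one of `t`
and its complement `¬t`, and that is closed under composition: if `t, s ∈ S` and `u` is a type
that the pair `(x, z)` can have when `(x, y)` has type `t` and `(y, z)` has type `s`, then
`u ∈ S` (genericity of `Γ` realizes every such triangle).

For three orders, each unit vector `eⱼ` or its complement lies in `S`; by pigeonhole two of these
three vectors are of the same kind, and two such vectors agree at exactly one coordinate `l`.
Composing them yields every type `u` with `u l` equal to their common value, so `S` is the set
of types with a prescribed value at `l`, i.e. `<` is `<ₗ` or its reverse.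
-/

open Function

theorem not_rel_iff_rel_swap_of_ne {α : Type*} {r : α → α → Prop} [IsStrictTotalOrder α r]
    {a b : α} (hab : a ≠ b) : ¬ r a b ↔ r b a := by
  rcases trichotomous_of r a b with h | h | h
  · exact iff_of_false (not_not.2 h) (asymm h)
  · exact absurd h hab
  · exact iff_of_true (asymm h) h

section TypeOrder

variable {ι : Type*}

/-- `u` is a possible type of `(x, z)` when `(x, y)` has type `t` and `(y, z)` has type `s`. -/
def Composable (t s u : ι → Bool) : Prop :=
  ∀ i, t i = s i → u i = t i

structure IsTypeOrder (S : (ι → Bool) → Prop) : Prop where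
  compl_iff : ∀ t, S (fun i => !t i) ↔ ¬ S t
  trans : ∀ t s u, Composable t s u → S t → S s → S u

theorem IsTypeOrder.iff_of_agree_only_at {S : (ι → Bool) → Prop} (hS : IsTypeOrder S)
    {t s : ι → Bool} {l : ι} (ht : S t) (hs : S s) (hts : ∀ i, t i = s i → i = l)
    (u : ι → Bool) : S u ↔ u l = t l := by
  have key : ∀ v, v l = t l → S v := fun v hv =>
    hS.trans t s v (fun i hi => hts i hi ▸ hv) ht hs
  refine ⟨fun hu => ?_, key u⟩
  by_contra h
  exact (hS.compl_iff u).1 (key _ (by simpa using Bool.eq_not_of_ne h)) hu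

theorem IsTypeOrder.exists_agree_only_at {S : (Fin 3 → Bool) → Prop} (hS : IsTypeOrder S) :
    ∃ t s l, S t ∧ S s ∧ ∀ i, t i = s i → i = l := by
  have hunit : ∀ j, ∃ b, S (update (fun _ => !b) j b) := fun j => by
    by_cases h : S (update (fun _ => false) j true)
    · exact ⟨true, h⟩
    · refine ⟨false, ?_⟩
      convert (hS.compl_iff _).2 h using 2 with i
      by_cases hij : i = j <;> simp [hij]
  choose b hb using hunit
  -- pigeonhole: two bits `b j = b k` coincide, and those two vectors agree only at the third index
  obtain ⟨j, k, l, hjk⟩ : ∃ j k l : Fin 3,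
      ∀ i, update (fun _ => !b j) j (b j) i = update (fun _ => !b k) k (b k) i → i = l := by
    clear hb; revert b; decide
  exact ⟨_, _, l, hb j, hb k, hjk⟩

theorem IsTypeOrder.exists_eq_coord {S : (Fin 3 → Bool) → Prop} (hS : IsTypeOrder S) :
    ∃ l, (∀ t, S t ↔ t l = true) ∨ (∀ t, S t ↔ t l = false) := by
  obtain ⟨t, s, l, ht, hs, hts⟩ := hS.exists_agree_only_at
  refine ⟨l, ?_⟩
  cases h : t l
  · exact Or.inr fun u => h ▸ hS.iff_of_agree_only_at ht hs hts u
  · exact Or.inl fun u => h ▸ hS.iff_of_agree_only_at ht hs hts u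

end TypeOrder

/-- The ranks (number of smaller vertices) in the order on `{0, 1, 2}` with `0 < 1 ↔ a`,
`1 < 2 ↔ b` and `0 < 2 ↔ c`. -/
def triangleRank (a b c : Bool) : Fin 3 → ℕ :=
  ![(!a).toNat + (!c).toNat, a.toNat + (!b).toNat, b.toNat + c.toNat]

theorem triangleRank_spec {a b c : Bool} (h : a = b → c = a) :
    Injective (triangleRank a b c) ∧ (triangleRank a b c 0 < triangleRank a b c 1 ↔ a) ∧
      (triangleRank a b c 1 < triangleRank a b c 2 ↔ b) ∧
      (triangleRank a b c 0 < triangleRank a b c 2 ↔ c) := by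
  revert a b c; decide

section Realization

variable {Γ ι : Type*} (o : ι → Γ → Γ → Prop)

open Classical

def EmbedsFiniteStructures : Prop :=
  ∀ (A : Type) (_ : Fintype A) (r : ι → A → A → Prop), (∀ i, IsStrictTotalOrder A (r i)) →
    ∃ e : A → Γ, Injective e ∧ ∀ i a b, r i a b ↔ o i (e a) (e b)

noncomputable def twoType (x y : Γ) : ι → Bool :=
  fun i => decide (o i x y)

theorem twoType_eq_true_iff {x y : Γ} {i : ι} : twoType o x y i = true ↔ o i x y :=
  decide_eq_true_iff

theorem twoType_eq_false_iff {x y : Γ} {i : ι} : twoType o x y i = false ↔ ¬ o i x y :=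
  decide_eq_false_iff_not

theorem twoType_swap [∀ i, IsStrictTotalOrder Γ (o i)] {x y : Γ} (hxy : x ≠ y) :
    twoType o y x = fun i => !twoType o x y i := by
  funext i
  by_cases hi : o i x y
  · rw [(twoType_eq_true_iff o).2 hi, (twoType_eq_false_iff o).2 (asymm hi)]; rfl
  · rw [(twoType_eq_false_iff o).2 hi,
      (twoType_eq_true_iff o).2 ((not_rel_iff_rel_swap_of_ne hxy).1 hi)]; rfl

theorem exists_twoType_triangle (hgen : EmbedsFiniteStructures o) {t s u : ι → Bool}
    (h : Composable t s u) : ∃ x y z, x ≠ y ∧ y ≠ z ∧ x ≠ z ∧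
      twoType o x y = t ∧ twoType o y z = s ∧ twoType o x z = u := by
  have spec i := triangleRank_spec (h i)
  obtain ⟨e, he, hr⟩ := hgen (Fin 3) inferInstance
    (fun i => (· < ·) on triangleRank (t i) (s i) (u i))
    (fun i => (spec i).1.isStrictTotalOrder_onFun (r := (· < ·)))
  refine ⟨e 0, e 1, e 2, he.ne (by decide), he.ne (by decide), he.ne (by decide), ?_, ?_, ?_⟩ <;>
    funext i <;> rw [Bool.eq_iff_iff, twoType_eq_true_iff, ← hr] <;> simp [onFun, spec i]

theorem exists_twoType_eq (hgen : EmbedsFiniteStructures o) (t : ι → Bool) :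
    ∃ x y, x ≠ y ∧ twoType o x y = t := by
  obtain ⟨x, y, -, hxy, -, -, hxyt, -⟩ := exists_twoType_triangle o hgen (s := t) (u := t) (fun _ _ => rfl)
  exact ⟨x, y, hxy, hxyt⟩

end Realization

section InvariantOrder

variable {Γ ι : Type*} (o : ι → Γ → Γ → Prop) (lt : Γ → Γ → Prop)

def IsUnionOfTwoTypes : Prop :=
  ∀ x y x' y' : Γ, x ≠ y → x' ≠ y' → (∀ i, o i x y ↔ o i x' y') → (lt x y ↔ lt x' y')

def typesOf (t : ι → Bool) : Prop :=
  ∃ x y, x ≠ y ∧ twoType o x y = t ∧ lt x y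

variable {o lt}

theorem IsUnionOfTwoTypes.rel_iff_typesOf (hinv : IsUnionOfTwoTypes o lt) {x y : Γ}
    (hxy : x ≠ y) : lt x y ↔ typesOf o lt (twoType o x y) := by
  refine ⟨fun h => ⟨x, y, hxy, rfl, h⟩, fun ⟨x', y', hxy', ht, h⟩ => ?_⟩
  refine (hinv x y x' y' hxy hxy' fun i => ?_).2 h
  rw [← twoType_eq_true_iff o, ← twoType_eq_true_iff o, ht]

theorem IsUnionOfTwoTypes.isTypeOrder_typesOf [∀ i, IsStrictTotalOrder Γ (o i)]
    [IsStrictTotalOrder Γ lt] (hinv : IsUnionOfTwoTypes o lt) (hgen : EmbedsFiniteStructures o) :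
    IsTypeOrder (typesOf o lt) where
  compl_iff t := by
    obtain ⟨x, y, hxy, rfl⟩ := exists_twoType_eq o hgen t
    rw [← twoType_swap o hxy, ← hinv.rel_iff_typesOf hxy.symm, ← hinv.rel_iff_typesOf hxy,
      not_rel_iff_rel_swap_of_ne hxy]
  trans t s u h ht hs := by
    obtain ⟨x, y, z, hxy, hyz, hxz, rfl, rfl, rfl⟩ := exists_twoType_triangle o hgen h
    rw [← hinv.rel_iff_typesOf hxy] at ht
    rw [← hinv.rel_iff_typesOf hyz] at hs
    exact (hinv.rel_iff_typesOf hxz).1 (_root_.trans ht hs)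

end InvariantOrder

/-- In the generic 3-dimensional permutation structure `Γ` (with
strict linear orders `o 0, o 1, o 2`, embedding every finite structure of three
linear orders), any definable linear order `lt` that is a union of 2-types (i.e.
invariant: whether `lt x y` holds depends only on the quantifier-free 2-type of
`(x,y)`) equals some `o i` or its reversal. -/
theorem stmt5 {Γ : Type*} (o : Fin 3 → Γ → Γ → Prop)
    (ho : ∀ i, IsStrictTotalOrder Γ (o i))
    (hgen : ∀ (A : Type) (_ : Fintype A) (r : Fin 3 → A → A → Prop),
      (∀ i, IsStrictTotalOrder A (r i)) →
      ∃ e : A → Γ, Function.Injective e ∧ ∀ i a b, r i a b ↔ o i (e a) (e b))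
    (lt : Γ → Γ → Prop) (hlt : IsStrictTotalOrder Γ lt)
    (hinv : ∀ x y x' y' : Γ, x ≠ y → x' ≠ y' →
      (∀ i, o i x y ↔ o i x' y') → (lt x y ↔ lt x' y')) :
    ∃ i, (∀ x y, lt x y ↔ o i x y) ∨ (∀ x y, lt x y ↔ o i y x) := by
  have hinv : IsUnionOfTwoTypes o lt := hinv
  obtain ⟨l, hl | hl⟩ := (hinv.isTypeOrder_typesOf hgen).exists_eq_coord <;> refine ⟨l, ?_⟩
  · refine Or.inl fun x y => ?_
    rcases eq_or_ne x y with rfl | hxy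
    · exact iff_of_false (irrefl x) (irrefl x)
    · rw [hinv.rel_iff_typesOf hxy, hl, twoType_eq_true_iff]
  · refine Or.inr fun x y => ?_
    rcases eq_or_ne x y with rfl | hxy
    · exact iff_of_false (irrefl x) (irrefl x)
    · rw [hinv.rel_iff_typesOf hxy, hl, twoType_eq_false_iff, not_rel_iff_rel_swap_of_ne hxy]
end

section
/- Fix n and ℓ = ⌊n/2⌋, and suppose n!/(n−ℓ)! > 2^ℓ · k. Consider a set A of n points each carrying k linear orders. A pairing is a set of ℓ disjoint unordered pairs of points of A; a pairing is separated if for every i ≤ k there is a pair whose two points are not adjacent in the order <_i (restricted to A). Then A admits at least one separated pairing. -/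
/-!
Read an arrangement of the `n` points (one of `n!` lists) as the pairing formed by its first
`ℓ` consecutive pairs. If no pairing were separated, every arrangement would, after ranking the
points by a suitable order `<ᵢ`, become an arrangement of `0, …, n - 1` whose first `ℓ` pairs are
consecutive numbers. Merging such a leading pair `{x, x + 1}` into `x` is injective up to an
orientation bit and leaves an arrangement of `0, …, n - 2` with `ℓ - 1` such pairs, so there are at
most `2 ^ ℓ * (n - ℓ)!` of them. Hence `n! ≤ k * 2 ^ ℓ * (n - ℓ)!`, against the hypothesis.
-/

open Finset

variable {α β : Type*}

theorem List.perm_range_of_nodup {L : List ℕ} {m : ℕ} (hL : L.Nodup) (hlen : L.length = m)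
    (hlt : ∀ y ∈ L, y < m) : L.Perm (List.range m) :=
  (List.subperm_of_subset hL fun y hy => List.mem_range.2 (hlt y hy)).perm_of_length_le
    (by simp [hlen])

theorem List.eq_of_map_eq_of_injOn {f : α → β} {s : Set α} {L₁ L₂ : List α}
    (hf : Set.InjOn f s) (h₁ : ∀ a ∈ L₁, a ∈ s) (h₂ : ∀ a ∈ L₂, a ∈ s)
    (h : L₁.map f = L₂.map f) : L₁ = L₂ := by
  induction L₁ generalizing L₂ with
  | nil => simpa [eq_comm] using h
  | cons a L₁ ih =>
    rcases L₂ with _ | ⟨b, L₂⟩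
    · simp at h
    · simp only [List.map_cons, List.cons.injEq] at h
      simp only [List.mem_cons, forall_eq_or_imp] at h₁ h₂
      rw [hf h₁.1 h₂.1 h.1, ih h₁.2 h₂.2 h.2]

theorem Finset.card_le_card_mul_of_forall_exists_injective {ι : Type*} [Fintype ι] {s : Finset α}
    {t : Finset β} (f : ι → α → β) (hf : ∀ i, Function.Injective (f i))
    (h : ∀ a ∈ s, ∃ i, f i a ∈ t) : #s ≤ Fintype.card ι * #t := by
  classical
  rcases s.eq_empty_or_nonempty with rfl | ⟨a₀, ha₀⟩
  · simp
  have : Nonempty ι := ⟨(h a₀ ha₀).choose⟩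
  choose! g hg using h
  calc #s ≤ #((univ : Finset ι) ×ˢ t) :=
        card_le_card_of_injOn (fun a => (g a, f (g a) a))
          (fun a ha => mem_product.2 ⟨mem_univ _, hg a ha⟩) fun a _ b _ hab => by
            simp only [Prod.mk.injEq] at hab
            exact hf _ (hab.1 ▸ hab.2)
    _ = Fintype.card ι * #t := by simp

theorem exists_equiv_fin_lt_iff [Fintype α] {n : ℕ} (r : α → α → Prop) [IsStrictTotalOrder α r]
    (hn : Fintype.card α = n) : ∃ e : α ≃ Fin n, ∀ a b, r a b ↔ e a < e b := by
  classical
  let : LinearOrder α := linearOrderOfSTO r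
  exact ⟨(Fintype.orderIsoFinOfCardEq α hn).symm.toEquiv, fun a b =>
    ((Fintype.orderIsoFinOfCardEq α hn).symm.lt_iff_lt).symm⟩

namespace SeparatedPairing

def PairsSatisfy (R : α → α → Prop) : ℕ → List α → Prop
  | 0, _ => True
  | l + 1, a :: b :: L => R a b ∧ PairsSatisfy R l L
  | _ + 1, _ => False

section PairsSatisfy

variable {R : α → α → Prop} {l : ℕ}

theorem pairsSatisfy_succ_iff {L : List α} :
    PairsSatisfy R (l + 1) L ↔ ∃ a b L', L = a :: b :: L' ∧ R a b ∧ PairsSatisfy R l L' := by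
  rcases L with _ | ⟨a, _ | ⟨b, L⟩⟩ <;> simp [PairsSatisfy]

theorem PairsSatisfy.append {L : List α} (h : PairsSatisfy R l L) (M : List α) :
    PairsSatisfy R l (L ++ M) := by
  induction l generalizing L with
  | zero => trivial
  | succ l ih =>
    obtain ⟨a, b, L, rfl, hab, hL⟩ := pairsSatisfy_succ_iff.1 h
    exact ⟨hab, ih hL⟩

theorem PairsSatisfy.map {S : β → β → Prop} {L : List α} (f : α → β)
    (hf : ∀ a ∈ L, ∀ b ∈ L, R a b → S (f a) (f b)) (h : PairsSatisfy R l L) :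
    PairsSatisfy S l (L.map f) := by
  induction l generalizing L with
  | zero => trivial
  | succ l ih =>
    obtain ⟨a, b, L, rfl, hab, hL⟩ := pairsSatisfy_succ_iff.1 h
    refine ⟨hf a (by simp) b (by simp) hab, ih (fun x hx y hy => hf x ?_ y ?_) hL⟩ <;>
      simp [hx, hy]

end PairsSatisfy

section Pairing

variable [DecidableEq α]

def pairing : ℕ → List α → Finset (Finset α)
  | 0, _ => ∅
  | l + 1, a :: b :: L => insert {a, b} (pairing l L)
  | _ + 1, _ => ∅

variable {l : ℕ} {L : List α} {p q : Finset α}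

theorem mem_of_mem_of_mem_pairing {a : α} (hp : p ∈ pairing l L) (ha : a ∈ p) : a ∈ L := by
  induction l generalizing L with
  | zero => simp [pairing] at hp
  | succ l ih =>
    rcases L with _ | ⟨b, _ | ⟨c, L⟩⟩
    · simp [pairing] at hp
    · simp [pairing] at hp
    · simp only [pairing, mem_insert] at hp
      rcases hp with rfl | hp
      · simp only [mem_insert, mem_singleton] at ha
        rcases ha with rfl | rfl <;> simp
      · exact List.mem_cons_of_mem _ (List.mem_cons_of_mem _ (ih hp))

theorem card_eq_two_of_mem_pairing (hL : L.Nodup) (hp : p ∈ pairing l L) : #p = 2 := by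
  induction l generalizing L with
  | zero => simp [pairing] at hp
  | succ l ih =>
    rcases L with _ | ⟨a, _ | ⟨b, L⟩⟩
    · simp [pairing] at hp
    · simp [pairing] at hp
    · simp only [pairing, mem_insert] at hp
      rcases hp with rfl | hp
      · exact card_pair (by simp_all)
      · exact ih (hL.sublist (by simp)) hp

theorem disjoint_of_mem_pairing (hL : L.Nodup) (hp : p ∈ pairing l L) (hq : q ∈ pairing l L)
    (hpq : p ≠ q) : Disjoint p q := by
  induction l generalizing L with
  | zero => simp [pairing] at hp
  | succ l ih =>
    rcases L with _ | ⟨a, _ | ⟨b, L⟩⟩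
    · simp [pairing] at hp
    · simp [pairing] at hp
    · have hL' : L.Nodup := hL.sublist (by simp)
      have hab : ∀ c ∈ ({a, b} : Finset α), ∀ r ∈ pairing l L, c ∉ r := by
        intro c hc r hr hcr
        have := mem_of_mem_of_mem_pairing hr hcr
        simp only [mem_insert, mem_singleton] at hc
        rcases hc with rfl | rfl <;> simp_all
      simp only [pairing, mem_insert] at hp hq
      rcases hp with rfl | hp <;> rcases hq with rfl | hq
      · exact absurd rfl hpq
      · exact disjoint_left.2 fun c hc => hab c hc q hq
      · exact disjoint_right.2 fun c hc => hab c hc p hp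
      · exact ih hL' hp hq

theorem card_pairing (hL : L.Nodup) (hl : 2 * l ≤ L.length) : #(pairing l L) = l := by
  induction l generalizing L with
  | zero => simp [pairing]
  | succ l ih =>
    rcases L with _ | ⟨a, _ | ⟨b, L⟩⟩
    · simp at hl
    · simp at hl; omega
    · have hL' : L.Nodup := hL.sublist (by simp)
      have hnot : {a, b} ∉ pairing l L := fun h =>
        (List.nodup_cons.1 hL).1
          (List.mem_cons_of_mem _ (mem_of_mem_of_mem_pairing h (mem_insert_self a _)))
      rw [pairing, card_insert_of_notMem hnot, ih hL' (by simp at hl; omega)]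

theorem pairsSatisfy_of_forall_mem_pairing {R : α → α → Prop} (hL : L.Nodup)
    (hl : 2 * l ≤ L.length) (h : ∀ p ∈ pairing l L, ∀ a ∈ p, ∀ b ∈ p, a ≠ b → R a b) :
    PairsSatisfy R l L := by
  induction l generalizing L with
  | zero => trivial
  | succ l ih =>
    rcases L with _ | ⟨a, _ | ⟨b, L⟩⟩
    · simp at hl
    · simp at hl; omega
    · refine ⟨h {a, b} (by simp [pairing]) a (by simp) b (by simp) (by simp_all), ?_⟩
      exact ih (hL.sublist (by simp)) (by simp at hl; omega)
        fun p hp => h p (by simp [pairing, hp])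

end Pairing

section Arrangements

variable [DecidableEq α]

def arrangements (s : List α) : Finset (List α) := s.permutations.toFinset

theorem mem_arrangements {s L : List α} : L ∈ arrangements s ↔ L.Perm s := by
  simp [arrangements, List.mem_permutations]

theorem card_arrangements {s : List α} (hs : s.Nodup) :
    #(arrangements s) = s.length.factorial := by
  rw [arrangements, List.toFinset_card_of_nodup (List.nodup_permutations s hs),
    List.length_permutations]

end Arrangements

def Consecutive (a b : ℕ) : Prop := a + 1 = b ∨ b + 1 = a

open Classical in
noncomputable def consecutivePairArrangements (m l : ℕ) : Finset (List ℕ) :=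
  (arrangements (List.range m)).filter (PairsSatisfy Consecutive l)

open Classical in
theorem mem_consecutivePairArrangements {m l : ℕ} {L : List ℕ} :
    L ∈ consecutivePairArrangements m l ↔
      L.Perm (List.range m) ∧ PairsSatisfy Consecutive l L := by
  rw [consecutivePairArrangements, mem_filter, mem_arrangements]

def contract (x y : ℕ) : ℕ := if y ≤ x then y else y - 1

theorem contract_injOn (x : ℕ) : Set.InjOn (contract x) {y | y ≠ x + 1} := by
  intro y hy z hz h
  simp only [Set.mem_ofPred_eq] at hy hz
  unfold contract at h; split_ifs at h <;> omega

/-- Merges the leading pair `{x, x + 1}` into `x` and closes the gap in the values;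
the flag records the orientation of the pair. -/
def collapse : List ℕ → Bool × List ℕ
  | a :: b :: L => (decide (a < b), (L ++ [min a b]).map (contract (min a b)))
  | L => (false, L)

section Counting

variable {m l : ℕ}

theorem exists_of_mem_consecutivePairArrangements_succ {L : List ℕ}
    (hL : L ∈ consecutivePairArrangements (m + 1) (l + 1)) :
    ∃ a b L', L = a :: b :: L' ∧ Consecutive a b ∧ PairsSatisfy Consecutive l L' ∧ L'.Nodup ∧
      L'.length + 1 = m ∧ min a b < m ∧
      ∀ y ∈ L', y ≠ min a b ∧ y ≠ min a b + 1 ∧ y < m + 1 := by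
  obtain ⟨hperm, hpairs⟩ := mem_consecutivePairArrangements.1 hL
  obtain ⟨a, b, L', rfl, hab, hL'⟩ := pairsSatisfy_succ_iff.1 hpairs
  have hnd := hperm.nodup_iff.2 List.nodup_range
  have hlt : ∀ y ∈ a :: b :: L', y < m + 1 := fun y hy => List.mem_range.1 (hperm.subset hy)
  simp only [List.nodup_cons, List.mem_cons, not_or] at hnd
  have ha := hlt a (by simp)
  have hb := hlt b (by simp)
  refine ⟨a, b, L', rfl, hab, hL', hnd.2.2, by simpa using hperm.length_eq,
    by unfold Consecutive at hab; omega, fun y hy => ?_⟩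
  have hya : y ≠ a := fun h => hnd.1.2 (h ▸ hy)
  have hyb : y ≠ b := fun h => hnd.2.1 (h ▸ hy)
  have := hlt y (by simp [hy])
  unfold Consecutive at hab
  omega

theorem collapse_mem {L : List ℕ} (hL : L ∈ consecutivePairArrangements (m + 1) (l + 1)) :
    (collapse L).2 ∈ consecutivePairArrangements m l := by
  obtain ⟨a, b, L, rfl, -, hpairs, hnd, hlen, hxm, hL⟩ :=
    exists_of_mem_consecutivePairArrangements_succ hL
  set x := min a b
  have hx : ∀ y ∈ L ++ [x], y ≠ x + 1 ∧ y < m + 1 := by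
    intro y hy
    rcases List.mem_append.1 hy with hy | hy
    · exact (hL y hy).2
    · rw [List.mem_singleton.1 hy]; omega
  show (L ++ [x]).map (contract x) ∈ _
  refine mem_consecutivePairArrangements.2 ⟨List.perm_range_of_nodup ?_ ?_ ?_, ?_⟩
  · refine List.Nodup.map_on (fun y hy z hz => contract_injOn x (hx y hy).1 (hx z hz).1) ?_
    rw [List.nodup_append]
    refine ⟨hnd, List.nodup_singleton x, fun y hy z hz => ?_⟩
    rw [List.mem_singleton.1 hz]
    exact (hL y hy).1
  · simp [hlen]
  · intro y hy
    obtain ⟨z, hz, rfl⟩ := List.mem_map.1 hy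
    have := hx z hz
    unfold contract; split_ifs <;> omega
  · refine (hpairs.append _).map _ fun y hy z hz hyz => ?_
    have := (hx y hy).1; have := (hx z hz).1
    unfold Consecutive at hyz ⊢; unfold contract; split_ifs <;> omega

theorem collapse_injOn :
    Set.InjOn collapse (consecutivePairArrangements (m + 1) (l + 1) : Set (List ℕ)) := by
  intro L₁ h₁ L₂ h₂ h
  obtain ⟨a, b, L₁, rfl, hab, -, -, -, -, hL₁⟩ :=
    exists_of_mem_consecutivePairArrangements_succ h₁
  obtain ⟨c, d, L₂, rfl, hcd, -, -, -, -, hL₂⟩ :=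
    exists_of_mem_consecutivePairArrangements_succ h₂
  simp only [collapse, Prod.mk.injEq, decide_eq_decide, List.map_append, List.map_singleton] at h
  obtain ⟨horient, hmap⟩ := h
  obtain ⟨hmap, hlast⟩ := List.append_inj' hmap rfl
  have hx : min a b = min c d := by simpa [contract] using hlast
  rw [← hx] at hmap hL₂
  have hL : L₁ = L₂ := List.eq_of_map_eq_of_injOn (contract_injOn _)
    (fun y hy => (hL₁ y hy).2.1) (fun y hy => (hL₂ y hy).2.1) hmap
  unfold Consecutive at hab hcd
  obtain ⟨rfl, rfl⟩ : a = c ∧ b = d := by omega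
  rw [hL]

theorem card_consecutivePairArrangements_succ_le :
    #(consecutivePairArrangements (m + 1) (l + 1)) ≤ 2 * #(consecutivePairArrangements m l) := by
  calc #(consecutivePairArrangements (m + 1) (l + 1))
      ≤ #((univ : Finset Bool) ×ˢ consecutivePairArrangements m l) :=
        card_le_card_of_injOn collapse (fun L hL => mem_product.2 ⟨mem_univ _, collapse_mem hL⟩)
          collapse_injOn
    _ = 2 * #(consecutivePairArrangements m l) := by simp

theorem card_consecutivePairArrangements_le (m l : ℕ) :
    #(consecutivePairArrangements m l) ≤ 2 ^ l * (m - l).factorial := by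
  classical
  induction l generalizing m with
  | zero =>
    rw [consecutivePairArrangements,
      filter_true_of_mem (p := PairsSatisfy Consecutive 0) fun _ _ => trivial,
      card_arrangements List.nodup_range, List.length_range, pow_zero, one_mul, Nat.sub_zero]
  | succ l ih =>
    rcases m with _ | m
    · refine (card_eq_zero.2 (eq_empty_of_forall_notMem fun L hL => ?_)).trans_le
        (Nat.zero_le _)
      obtain ⟨hperm, hpairs⟩ := mem_consecutivePairArrangements.1 hL
      obtain ⟨a, b, L, rfl, -⟩ := pairsSatisfy_succ_iff.1 hpairs
      simpa using hperm.length_eq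
    · calc #(consecutivePairArrangements (m + 1) (l + 1))
          ≤ 2 * #(consecutivePairArrangements m l) := card_consecutivePairArrangements_succ_le
        _ ≤ 2 * (2 ^ l * (m - l).factorial) := Nat.mul_le_mul_left 2 (ih m)
        _ = 2 ^ (l + 1) * (m + 1 - (l + 1)).factorial := by rw [Nat.add_sub_add_right]; ring

end Counting

theorem consecutive_of_not_between {r : α → α → Prop} {n : ℕ} {e : α ≃ Fin n}
    (he : ∀ a b, r a b ↔ e a < e b) {a b : α} (hab : a ≠ b)
    (h : ¬∃ c, (r a c ∧ r c b) ∨ (r b c ∧ r c a)) : Consecutive (e a) (e b) := by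
  have key : ∀ x y, e x < e y → (¬∃ c, r x c ∧ r c y) → (e x : ℕ) + 1 = e y := by
    intro x y hxy hnone
    by_contra hne
    have hlt : (e x : ℕ) + 1 < n := by have := (e y).isLt; rw [Fin.lt_def] at hxy; omega
    refine hnone ⟨e.symm ⟨_, hlt⟩, ?_⟩
    simp only [he, Equiv.apply_symm_apply, Fin.lt_def] at hxy ⊢
    omega
  rcases lt_or_gt_of_ne (e.injective.ne hab) with hlt | hlt
  · exact Or.inl (key a b hlt fun ⟨c, hc⟩ => h ⟨c, Or.inl hc⟩)
  · exact Or.inr (key b a hlt fun ⟨c, hc⟩ => h ⟨c, Or.inr hc⟩)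

theorem map_mem_consecutivePairArrangements [DecidableEq α] {r : α → α → Prop} {n l : ℕ}
    {e : α ≃ Fin n} (he : ∀ a b, r a b ↔ e a < e b) {L : List α} (hnd : L.Nodup)
    (hlen : L.length = n) (hl : 2 * l ≤ n)
    (h : ∀ p ∈ pairing l L, ∀ a ∈ p, ∀ b ∈ p, a ≠ b → ¬∃ c, (r a c ∧ r c b) ∨ (r b c ∧ r c a)) :
    L.map (fun a => (e a : ℕ)) ∈ consecutivePairArrangements n l := by
  have hpairs := pairsSatisfy_of_forall_mem_pairing hnd (hlen ▸ hl)
    fun p hp a ha b hb hab => And.intro hab (h p hp a ha b hb hab)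
  refine mem_consecutivePairArrangements.2 ⟨List.perm_range_of_nodup ?_ (by simp [hlen]) ?_, ?_⟩
  · exact hnd.map fun a b h => e.injective (Fin.ext h)
  · simp
  · exact hpairs.map _ fun a _ b _ h => consecutive_of_not_between he h.1 h.2

end SeparatedPairing

open SeparatedPairing

/-- If `n!/(n-ℓ)! > 2^ℓ · k` for `ℓ = ⌊n/2⌋`, then a set of `n`
points carrying `k` strict linear orders admits a separated pairing: a family of
`ℓ` pairwise disjoint unordered pairs such that for every order `r i` some pair
is not `r i`-adjacent (some third point lies strictly between its two members). -/
theorem stmt6 (n k : ℕ)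
    (hineq : Nat.factorial n / Nat.factorial (n - n / 2) > 2 ^ (n / 2) * k)
    (r : Fin k → Fin n → Fin n → Prop)
    (hr : ∀ i, IsStrictTotalOrder (Fin n) (r i)) :
    ∃ P : Finset (Finset (Fin n)),
      P.card = n / 2 ∧ (∀ p ∈ P, p.card = 2) ∧
      (∀ p ∈ P, ∀ q ∈ P, p ≠ q → Disjoint p q) ∧
      ∀ i : Fin k, ∃ p ∈ P, ∃ a ∈ p, ∃ b ∈ p, a ≠ b ∧
        ∃ c : Fin n, (r i a c ∧ r i c b) ∨ (r i b c ∧ r i c a) := by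
  classical
  by_contra hnone
  choose e he using fun i => haveI := hr i; exists_equiv_fin_lt_iff (r i) (Fintype.card_fin n)
  have hcover : ∀ L ∈ arrangements (List.finRange n), ∃ i,
      L.map (fun a => (e i a : ℕ)) ∈ consecutivePairArrangements n (n / 2) := by
    intro L hL
    have hnd : L.Nodup := (mem_arrangements.1 hL).nodup_iff.2 (List.nodup_finRange n)
    have hlen : L.length = n := by simpa using (mem_arrangements.1 hL).length_eq
    obtain ⟨i, hi⟩ : ∃ i, ∀ p ∈ pairing (n / 2) L, ∀ a ∈ p, ∀ b ∈ p, a ≠ b →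
        ¬∃ c, (r i a c ∧ r i c b) ∨ (r i b c ∧ r i c a) := by
      by_contra! h
      exact hnone ⟨pairing (n / 2) L, card_pairing hnd (by omega),
        fun p => card_eq_two_of_mem_pairing hnd,
        fun p hp q hq => disjoint_of_mem_pairing hnd hp hq, h⟩
    exact ⟨i, map_mem_consecutivePairArrangements (he i) hnd hlen (by omega) hi⟩
  have hcount := card_le_card_mul_of_forall_exists_injective _
    (fun i => List.map_injective_iff.2 fun a b h => (e i).injective (Fin.ext h)) hcover
  rw [card_arrangements (List.nodup_finRange n), List.length_finRange, Fintype.card_fin] at hcount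
  have hbound := Nat.mul_le_mul_left k (card_consecutivePairArrangements_le n (n / 2))
  have hlt :=
    (Nat.lt_div_iff_mul_lt' (Nat.factorial_dvd_factorial (Nat.sub_le n (n / 2))) _).1 hineq
  linarith
end

section
/- Let Γ be a homogeneous finite-dimensional permutation structure (finitely many linear orders), E a minimal non-trivial ∅-definable equivalence relation on Γ, and C, C′ distinct E-classes. Then no 2-type p is realized both by a pair (c, c′) with c ∈ C, c′ ∈ C′ and by a pair (c′′, c′′′) with c′′ ∈ C′, c′′′ ∈ C. -/
/-!
Suppose `a, b ∈ C` and `a', b' ∈ C'` with `tp(a, b') = tp(a', b)`. Homogeneity gives an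
automorphism `g` with `g a' = a` and `g b = b'`; it maps the class `C'` onto `C`, so `c := g b'`
lies in `C`, and `tp(b', c) = tp(b, b')`. Each order is transitive, so `b < b' < c` or
`c < b' < b` in every coordinate, whence `tp(b, c) = tp(b, b')`. As `E` is a union of 2-types,
`E b c` then forces `E b b'`, i.e. `C = C'`.
-/

section PermutationStructure

variable {Γ : Type*} {k : ℕ} {o : Fin k → Γ → Γ → Prop}

def SameType (o : Fin k → Γ → Γ → Prop) (x y x' y' : Γ) : Prop :=
  ∀ i, o i x y ↔ o i x' y'

def IsOrderAut (o : Fin k → Γ → Γ → Prop) (g : Γ ≃ Γ) : Prop :=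
  ∀ i x y, o i x y ↔ o i (g x) (g y)

def IsHomogeneous (o : Fin k → Γ → Γ → Prop) : Prop :=
  ∀ (A : Finset Γ) (f : Γ → Γ), (∀ a ∈ A, ∀ b ∈ A, SameType o a b (f a) (f b)) →
    ∃ g : Γ ≃ Γ, IsOrderAut o g ∧ ∀ a ∈ A, g a = f a

def IsDefinable (o : Fin k → Γ → Γ → Prop) (E : Γ → Γ → Prop) : Prop :=
  ∀ x y x' y', x ≠ y → x' ≠ y' → SameType o x y x' y' → (E x y ↔ E x' y')

theorem rel_swap_iff_not_rel {r : Γ → Γ → Prop} [IsStrictTotalOrder Γ r] {x y : Γ}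
    (hxy : x ≠ y) : r y x ↔ ¬ r x y := by
  refine ⟨fun hyx hxy' => asymm hxy' hyx, fun hnxy => ?_⟩
  rcases trichotomous_of r x y with h | h | h
  exacts [absurd h hnxy, absurd h hxy, h]

/-- With no orders at all, homogeneity would extend every map, including non-injective ones. -/
theorem IsHomogeneous.nonempty_index (hom : IsHomogeneous o) {x y : Γ} (hxy : x ≠ y) :
    Nonempty (Fin k) := by
  classical
  by_contra hk
  have : IsEmpty (Fin k) := not_nonempty_iff.mp hk
  obtain ⟨g, -, hg⟩ := hom {x, y} (fun _ => x) fun _ _ _ _ i => isEmptyElim i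
  exact hxy (g.injective ((hg x (by simp)).trans (hg y (by simp)).symm))

theorem IsDefinable.map_iff {E : Γ → Γ → Prop} (hdef : IsDefinable o E) (hE : Equivalence E)
    {g : Γ ≃ Γ} (hg : IsOrderAut o g) (x y : Γ) : E (g x) (g y) ↔ E x y := by
  by_cases hxy : x = y
  · subst hxy
    exact iff_of_true (hE.refl _) (hE.refl _)
  · exact (hdef x y (g x) (g y) hxy (g.injective.ne hxy) fun i => hg i x y).symm

variable (ho : ∀ i, IsStrictTotalOrder Γ (o i))
include ho

theorem SameType.diag (x x' : Γ) : SameType o x x x' x' := fun i =>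
  have := ho i
  iff_of_false (irrefl x) (irrefl x')

theorem SameType.swap {x y x' y' : Γ} (hxy : x ≠ y) (hxy' : x' ≠ y')
    (h : SameType o x y x' y') : SameType o y x y' x' := fun i => by
  have := ho i
  rw [rel_swap_iff_not_rel (r := o i) hxy, rel_swap_iff_not_rel (r := o i) hxy', h i]

theorem not_sameType_swap [Nonempty (Fin k)] {x y : Γ} (hxy : x ≠ y) :
    ¬ SameType o x y y x := fun h => by
  let i : Fin k := Classical.arbitrary _
  have := ho i
  exact iff_not_self ((h i).trans (rel_swap_iff_not_rel hxy))

/-- If `tp(x, y) = tp(y, z)`, then `y` lies between `x` and `z` in every order. -/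
theorem SameType.of_chain {x y z : Γ} (hxy : x ≠ y) (hyz : y ≠ z)
    (h : SameType o x y y z) : SameType o x y x z := fun i => by
  have := ho i
  refine ⟨fun hxy' => _root_.trans hxy' ((h i).1 hxy'), fun hxz => by_contra fun hnxy => ?_⟩
  have hyx : o i y x := (rel_swap_iff_not_rel hxy).2 hnxy
  have hzy : o i z y := (h.swap ho hxy hyz i).1 hyx
  exact asymm hxz (_root_.trans hzy hyx)

theorem IsHomogeneous.exists_aut_of_sameType (hom : IsHomogeneous o) {x y x' y' : Γ}
    (hxy : x ≠ y) (hxy' : x' ≠ y') (h : SameType o x y x' y') :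
    ∃ g : Γ ≃ Γ, IsOrderAut o g ∧ g x = x' ∧ g y = y' := by
  classical
  have hf : ∀ u ∈ ({x, y} : Finset Γ), ∀ v ∈ ({x, y} : Finset Γ),
      SameType o u v (if u = x then x' else y') (if v = x then x' else y') := by
    simp only [Finset.mem_insert, Finset.mem_singleton, forall_eq_or_imp, forall_eq]
    refine ⟨⟨?_, ?_⟩, ?_, ?_⟩
    · simpa using SameType.diag ho x x'
    · simpa [hxy.symm] using h
    · simpa [hxy.symm] using h.swap ho hxy hxy'
    · simpa [hxy.symm] using SameType.diag ho y y'
  obtain ⟨g, hg, hgf⟩ := hom _ _ hf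
  exact ⟨g, hg, by simpa using hgf x, by simpa [hxy.symm] using hgf y⟩

end PermutationStructure

theorem stmt10_general {Γ : Type*} (k : ℕ) (o : Fin k → Γ → Γ → Prop)
    (ho : ∀ i, IsStrictTotalOrder Γ (o i))
    -- homogeneity
    (hom : ∀ (A : Finset Γ) (f : Γ → Γ),
      (∀ a ∈ A, ∀ b ∈ A, ∀ i, o i a b ↔ o i (f a) (f b)) →
      ∃ g : Γ ≃ Γ, (∀ i x y, o i x y ↔ o i (g x) (g y)) ∧ ∀ a ∈ A, g a = f a)
    (E : Γ → Γ → Prop) (hE : Equivalence E)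
    -- E is a union of 2-types (∅-definable)
    (hdef : ∀ x y x' y' : Γ, x ≠ y → x' ≠ y' →
      (∀ i, o i x y ↔ o i x' y') → (E x y ↔ E x' y'))
    (a b a' b' : Γ)
    (hab : E a b) (ha'b' : E a' b') (hdistinct : ¬ E a a')
    (htp : ∀ i, o i a b' ↔ o i a' b) : False := by
  have ne_of_not_rel : ∀ {x y}, ¬ E x y → x ≠ y := fun h hxy => h (hxy ▸ hE.refl _)
  have hnEbb' : ¬ E b b' := fun h => hdistinct (hE.trans (hE.trans hab h) (hE.symm ha'b'))
  have hbb' := ne_of_not_rel hnEbb'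
  obtain ⟨g, hg, hga', hgb⟩ := IsHomogeneous.exists_aut_of_sameType ho hom
    (ne_of_not_rel fun h => hdistinct (hE.trans hab (hE.symm h)))
    (ne_of_not_rel fun h => hdistinct (hE.trans h (hE.symm ha'b'))) fun i => (htp i).symm
  have hEbc : E b (g b') :=
    hE.trans (hE.symm hab) (hga' ▸ ((IsDefinable.map_iff hdef hE hg a' b').2 ha'b'))
  have htype : SameType o b b' b' (g b') := fun i => hgb ▸ hg i b b'
  have := IsHomogeneous.nonempty_index hom hbb'
  have hbc : b ≠ g b' := fun h => not_sameType_swap ho hbb' (h ▸ htype)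
  have hb'c : b' ≠ g b' := fun h => hnEbb' (h ▸ hEbc)
  exact hnEbb' ((hdef b b' b (g b') hbb' hbc (htype.of_chain ho hbb' hb'c)).2 hEbc)

/-- In a homogeneous finite-dimensional permutation structure, if
`E` is a minimal non-trivial ∅-definable equivalence relation (∅-definable =
a union of 2-types, i.e. `E x y` depends only on the quantifier-free 2-type of
`(x,y)`), and `C = a/E ≠ a'/E` are distinct `E`-classes, then no 2-type is
realized both in `C × C'` and in `C' × C`: there are no `a, b ∈ C`,
`a', b' ∈ C'` with `tp(a,b') = tp(a',b)`. -/
theorem stmt10 {Γ : Type*} (k : ℕ) (o : Fin k → Γ → Γ → Prop)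
    (ho : ∀ i, IsStrictTotalOrder Γ (o i))
    -- homogeneity
    (hom : ∀ (A : Finset Γ) (f : Γ → Γ),
      (∀ a ∈ A, ∀ b ∈ A, ∀ i, o i a b ↔ o i (f a) (f b)) →
      ∃ g : Γ ≃ Γ, (∀ i x y, o i x y ↔ o i (g x) (g y)) ∧ ∀ a ∈ A, g a = f a)
    (E : Γ → Γ → Prop) (hE : Equivalence E)
    -- E is a union of 2-types (∅-definable)
    (hdef : ∀ x y x' y' : Γ, x ≠ y → x' ≠ y' →
      (∀ i, o i x y ↔ o i x' y') → (E x y ↔ E x' y'))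
    -- E is non-trivial
    (hnontriv : (∃ x y, x ≠ y ∧ E x y) ∧ (∃ x y, ¬ E x y))
    -- E is minimal among non-trivial ∅-definable equivalence relations
    (hmin : ∀ E' : Γ → Γ → Prop, Equivalence E' →
      (∀ x y x' y' : Γ, x ≠ y → x' ≠ y' →
        (∀ i, o i x y ↔ o i x' y') → (E' x y ↔ E' x' y')) →
      (∃ x y, x ≠ y ∧ E' x y) → (∀ x y, E' x y → E x y) →
      ∀ x y, E' x y ↔ E x y)
    (a b a' b' : Γ)
    (hab : E a b) (ha'b' : E a' b') (hdistinct : ¬ E a a')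
    (htp : ∀ i, o i a b' ↔ o i a' b) : False :=
  stmt10_general k o ho hom E hE hdef a b a' b' hab ha'b' hdistinct htp
end

section
/- Let Γ be a homogeneous 3-dimensional permutation structure (orders <₁,<₂,<₃), E a minimal non-trivial ∅-definable equivalence relation, and suppose the 2-type →123 (x <₁ y ∧ x <₂ y ∧ x <₃ y) is contained in E. Let C be an E-class, a₁, a₂ ∈ C, b ∉ C with a₁ <₁ b <₁ a₂. Then either (tp(a₁,b) = →12 and tp(b,a₂) = →13) or (tp(a₁,b) = →13 and tp(b,a₂) = →12), where →1i denotes the 2-type asserting <₁ and <_i but the reverse of the remaining order. -/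
/-!
All three pairs `(a₁, b)`, `(b, a₂)`, `(a₁, a₂)` are `<₁`-increasing, so each 2-type is fixed by
its orientation in `<₂` and `<₃`. Since `E` is `∅`-definable, `(a₁, a₂) ∈ E` shares its type with
neither `(a₁, b) ∉ E` nor `(b, a₂) ∉ E`; yet by transitivity `(a₁, a₂)` agrees with both in every
order in which they agree with each other. Hence `tp(a₁, b)` and `tp(b, a₂)` disagree in both
`<₂` and `<₃`, and as neither is `→123` (which lies in `E`), they are `→12` and `→13`.
-/

section StrictTotalOrder

variable {α : Type*} {r : α → α → Prop} [IsStrictTotalOrder α r]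

theorem rel_swap_of_not_rel {x y : α} (hxy : x ≠ y) (h : ¬ r x y) : r y x :=
  not_not.1 fun h' => hxy (Std.Trichotomous.trichotomous x y h h')

theorem rel_iff_of_rel_iff_rel {x y z : α} (hxy : x ≠ y) (hyz : y ≠ z) (h : r x y ↔ r y z) :
    r x z ↔ r x y := by
  by_cases hr : r x y
  · exact iff_of_true (_root_.trans hr (h.1 hr)) hr
  · have hzx : r z x :=
      _root_.trans (rel_swap_of_not_rel hyz (h.not.1 hr)) (rel_swap_of_not_rel hxy hr)
    exact iff_of_false (asymm hzx) hr

end StrictTotalOrder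

theorem forall_fin_three_iff_of_iff {p q : Fin 3 → Prop} (h₀ : p 0) (h₀' : q 0)
    (h₁ : p 1 ↔ q 1) (h₂ : p 2 ↔ q 2) : ∀ i, p i ↔ q i := by
  intro i
  fin_cases i
  exacts [iff_of_true h₀ h₀', h₁, h₂]

/-- `v` agrees with `t` or `u` in each coordinate yet equals neither, so `t` and `u` differ in
both coordinates; excluding `(True, True)` leaves the two crossed patterns. -/
theorem crossed_of_ne_of_agree {t₁ t₂ u₁ u₂ v₁ v₂ : Prop}
    (ht : ¬(t₁ ∧ t₂)) (hu : ¬(u₁ ∧ u₂))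
    (hv₁ : (t₁ ↔ u₁) → (v₁ ↔ t₁)) (hv₂ : (t₂ ↔ u₂) → (v₂ ↔ t₂))
    (hvt : ¬((t₁ ↔ v₁) ∧ (t₂ ↔ v₂))) (hvu : ¬((u₁ ↔ v₁) ∧ (u₂ ↔ v₂))) :
    (t₁ ∧ ¬t₂ ∧ ¬u₁ ∧ u₂) ∨ (¬t₁ ∧ t₂ ∧ u₁ ∧ ¬u₂) := by
  grind

theorem stmt11_general {Γ : Type*} (o : Fin 3 → Γ → Γ → Prop)
    (ho : ∀ i, IsStrictTotalOrder Γ (o i))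
    (E : Γ → Γ → Prop) (hE : Equivalence E)
    (hdef : ∀ x y x' y' : Γ, x ≠ y → x' ≠ y' →
      (∀ i, o i x y ↔ o i x' y') → (E x y ↔ E x' y'))
    -- the 2-type →123 is contained in E
    (h123 : ∀ x y, (∀ i, o i x y) → E x y)
    (a₁ a₂ b : Γ)
    (hC : E a₁ a₂) (hb : ¬ E a₁ b)
    (h1 : o 0 a₁ b) (h2 : o 0 b a₂) :
    ((o 0 a₁ b ∧ o 1 a₁ b ∧ o 2 b a₁) ∧ (o 0 b a₂ ∧ o 2 b a₂ ∧ o 1 a₂ b)) ∨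
      ((o 0 a₁ b ∧ o 2 a₁ b ∧ o 1 b a₁) ∧ (o 0 b a₂ ∧ o 1 b a₂ ∧ o 2 a₂ b)) := by
  have h0 : o 0 a₁ a₂ := _root_.trans h1 h2
  have hb₂ : ¬ E b a₂ := fun h => hb (hE.trans hC (hE.symm h))
  have not_123 : ∀ {x y}, ¬ E x y → o 0 x y → ¬(o 1 x y ∧ o 2 x y) :=
    fun hxy h0xy ⟨k₁, k₂⟩ => hxy (h123 _ _ fun i => by fin_cases i <;> assumption)
  have ne_type : ∀ {x y}, ¬ E x y → o 0 x y →
      ¬((o 1 x y ↔ o 1 a₁ a₂) ∧ (o 2 x y ↔ o 2 a₁ a₂)) :=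
    fun hxy h0xy ⟨k₁, k₂⟩ => hxy ((hdef _ _ _ _ (ne_of_irrefl h0xy) (ne_of_irrefl h0)
      (forall_fin_three_iff_of_iff h0xy h0 k₁ k₂)).mpr hC)
  have hne₁ : a₁ ≠ b := ne_of_irrefl h1
  have hne₂ : b ≠ a₂ := ne_of_irrefl h2
  rcases crossed_of_ne_of_agree (not_123 hb h1) (not_123 hb₂ h2)
      (rel_iff_of_rel_iff_rel hne₁ hne₂) (rel_iff_of_rel_iff_rel hne₁ hne₂)
      (ne_type hb h1) (ne_type hb₂ h2) with ⟨p₁, p₂, q₁, q₂⟩ | ⟨p₁, p₂, q₁, q₂⟩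
  · exact .inl ⟨⟨h1, p₁, rel_swap_of_not_rel hne₁ p₂⟩, ⟨h2, q₂, rel_swap_of_not_rel hne₂ q₁⟩⟩
  · exact .inr ⟨⟨h1, p₂, rel_swap_of_not_rel hne₁ p₁⟩, ⟨h2, q₁, rel_swap_of_not_rel hne₂ q₂⟩⟩

/-- Cross-type lemma.  In a homogeneous 3-dimensional permutation
structure with minimal non-trivial ∅-definable equivalence relation `E`
containing the 2-type `→123`, if `a₁, a₂` lie in an `E`-class `C`, `b ∉ C`, and
`a₁ <₁ b <₁ a₂`, then either `tp(a₁,b) = →12` and `tp(b,a₂) = →13`, or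
`tp(a₁,b) = →13` and `tp(b,a₂) = →12`.  Orders: `<₁ = o 0`, `<₂ = o 1`,
`<₃ = o 2`. -/
theorem stmt11 {Γ : Type*} (o : Fin 3 → Γ → Γ → Prop)
    (ho : ∀ i, IsStrictTotalOrder Γ (o i))
    (hom : ∀ (A : Finset Γ) (f : Γ → Γ),
      (∀ a ∈ A, ∀ b ∈ A, ∀ i, o i a b ↔ o i (f a) (f b)) →
      ∃ g : Γ ≃ Γ, (∀ i x y, o i x y ↔ o i (g x) (g y)) ∧ ∀ a ∈ A, g a = f a)
    (E : Γ → Γ → Prop) (hE : Equivalence E)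
    (hdef : ∀ x y x' y' : Γ, x ≠ y → x' ≠ y' →
      (∀ i, o i x y ↔ o i x' y') → (E x y ↔ E x' y'))
    (hnontriv : (∃ x y, x ≠ y ∧ E x y) ∧ (∃ x y, ¬ E x y))
    (hmin : ∀ E' : Γ → Γ → Prop, Equivalence E' →
      (∀ x y x' y' : Γ, x ≠ y → x' ≠ y' →
        (∀ i, o i x y ↔ o i x' y') → (E' x y ↔ E' x' y')) →
      (∃ x y, x ≠ y ∧ E' x y) → (∀ x y, E' x y → E x y) →
      ∀ x y, E' x y ↔ E x y)
    -- the 2-type →123 is contained in E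
    (h123 : ∀ x y, (∀ i, o i x y) → E x y)
    (a₁ a₂ b : Γ)
    (hC : E a₁ a₂) (hb : ¬ E a₁ b)
    (h1 : o 0 a₁ b) (h2 : o 0 b a₂) :
    ((o 0 a₁ b ∧ o 1 a₁ b ∧ o 2 b a₁) ∧ (o 0 b a₂ ∧ o 2 b a₂ ∧ o 1 a₂ b)) ∨
      ((o 0 a₁ b ∧ o 2 a₁ b ∧ o 1 b a₁) ∧ (o 0 b a₂ ∧ o 1 b a₂ ∧ o 2 a₂ b)) :=
  stmt11_general o ho E hE hdef h123 a₁ a₂ b hC hb h1 h2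
end

section
/- Let Γ be a homogeneous 3-dimensional permutation structure with minimal non-trivial ∅-definable equivalence relation E containing →123. Then every non-trivial ∅-definable equivalence relation on Γ contains E. -/
/-!
Let `E'` contain a pair `(a, b)` of distinct points. If `E a b` fails, compare the 2-type of
`(a, b)` with that of an `E`-pair `(u, v)`: since there are only three orders, it agrees off a
single coordinate `j` with the type of `(u, v)` or of `(v, u)`; call that `E`-pair `(p, q)`.
Extend by homogeneity to `c` with `tp(b, c) = tp(p, q)`. Off `j`, `b` lies between `a` and `c`,
so `tp(a, c)` is either `tp(a, b)`, making `(b, c)` a pair in `E ∩ E'`, or `tp(p, q)`, forcing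
`E a b`. Hence `E ∩ E'` is a non-trivial definable equivalence relation inside `E`, so it is `E`
by minimality.
-/

section

variable {ι Γ : Type*}

theorem rel_iff_of_rel_iff_rel_s13 {r : Γ → Γ → Prop} [IsStrictTotalOrder Γ r] {a b c : Γ}
    (hab : a ≠ b) (hbc : b ≠ c) (h : r a b ↔ r b c) : r a c ↔ r a b := by
  constructor
  · intro hac
    by_contra hnab
    have hba : r b a := (trichotomous_of r a b).resolve_left hnab |>.resolve_left hab
    have hcb : r c b := (trichotomous_of r b c).resolve_left (mt h.mpr hnab) |>.resolve_left hbc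
    exact irrefl_of r a (trans_of r hac (trans_of r hcb hba))
  · exact fun hab' => trans_of r hab' (h.mp hab')

theorem rel_swap_iff_not {r : Γ → Γ → Prop} [IsStrictTotalOrder Γ r] {a b : Γ} (hab : a ≠ b) :
    r b a ↔ ¬ r a b :=
  ⟨fun hba hab' => asymm_of r hab' hba,
    fun h => ((trichotomous_of r a b).resolve_left h).resolve_left hab⟩

theorem Fin.exists_forall_ne_or_forall_ne_not (d : Fin 3 → Prop) :
    ∃ j : Fin 3, (∀ i ≠ j, d i) ∨ ∀ i ≠ j, ¬ d i := by
  simp [Fin.exists_fin_succ, Fin.forall_fin_succ]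
  tauto

namespace PermutationStructure

variable (o : ι → Γ → Γ → Prop)

def SameType (x y x' y' : Γ) : Prop := ∀ i, o i x y ↔ o i x' y'

def IsDefinable (R : Γ → Γ → Prop) : Prop :=
  ∀ x y x' y' : Γ, x ≠ y → x' ≠ y' → SameType o x y x' y' → (R x y ↔ R x' y')

def IsHomogeneous : Prop :=
  ∀ (A : Finset Γ) (f : Γ → Γ), (∀ a ∈ A, ∀ b ∈ A, ∀ i, o i a b ↔ o i (f a) (f b)) →
    ∃ g : Γ ≃ Γ, (∀ i x y, o i x y ↔ o i (g x) (g y)) ∧ ∀ a ∈ A, g a = f a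

variable {o}

theorem IsDefinable.inf {R S : Γ → Γ → Prop} (hR : IsDefinable o R) (hS : IsDefinable o S) :
    IsDefinable o fun x y => R x y ∧ S x y :=
  fun x y x' y' hxy hxy' h => and_congr (hR x y x' y' hxy hxy' h) (hS x y x' y' hxy hxy' h)

theorem IsHomogeneous.exists_sameType [∀ i, Std.Irrefl (o i)] (hom : IsHomogeneous o)
    {p q : Γ} (hpq : p ≠ q) (b : Γ) : ∃ c, b ≠ c ∧ SameType o p q b c := by
  obtain ⟨g, hg, hgp⟩ := hom {p} (fun _ => b) (by
    simp only [Finset.mem_singleton]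
    rintro _ rfl _ rfl i
    exact iff_of_false (irrefl_of (o i) _) (irrefl_of (o i) b))
  rw [← hgp p (Finset.mem_singleton_self p)]
  exact ⟨g q, g.injective.ne hpq, fun i => hg i p q⟩

theorem le_of_minimal_of_exists_pair {E E' : Γ → Γ → Prop} (hE : Equivalence E)
    (hE' : Equivalence E') (hdef : IsDefinable o E) (hdef' : IsDefinable o E')
    (hmin : ∀ E' : Γ → Γ → Prop, Equivalence E' → IsDefinable o E' →
      (∃ x y, x ≠ y ∧ E' x y) → (∀ x y, E' x y → E x y) → ∀ x y, E' x y ↔ E x y)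
    (hpair : ∃ x y, x ≠ y ∧ E x y ∧ E' x y) : ∀ x y, E x y → E' x y := by
  have hinf : Equivalence fun x y => E x y ∧ E' x y :=
    ⟨fun x => ⟨hE.refl x, hE'.refl x⟩, fun h => ⟨hE.symm h.1, hE'.symm h.2⟩,
      fun h h' => ⟨hE.trans h.1 h'.1, hE'.trans h.2 h'.2⟩⟩
  intro x y hxy
  exact ((hmin _ hinf (hdef.inf hdef') hpair fun _ _ h => h.1) x y).mpr hxy |>.2

section StrictTotalOrder

variable [∀ i, IsStrictTotalOrder Γ (o i)] {E E' : Γ → Γ → Prop}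

theorem exists_pair_of_sameType_off (hom : IsHomogeneous o) (hE : Equivalence E)
    (hE' : Equivalence E') (hdef : IsDefinable o E) (hdef' : IsDefinable o E')
    {a b p q : Γ} (hab : a ≠ b) (hE'ab : E' a b) (hEab : ¬ E a b) (hpq : p ≠ q) (hEpq : E p q)
    (j : ι) (hoff : ∀ i ≠ j, (o i a b ↔ o i p q)) : ∃ x y, x ≠ y ∧ E x y ∧ E' x y := by
  obtain ⟨c, hbc, hpqbc⟩ := hom.exists_sameType hpq b
  have hEbc : E b c := (hdef p q b c hpq hbc hpqbc).mp hEpq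
  have hac : a ≠ c := by
    rintro rfl
    exact hEab (hE.symm hEbc)
  -- off `j`, `b` lies between `a` and `c`
  have hoff_ac : ∀ i ≠ j, (o i a c ↔ o i a b) := fun i hi =>
    rel_iff_of_rel_iff_rel_s13 hab hbc ((hoff i hi).trans (hpqbc i))
  by_cases hjc : o j a c ↔ o j a b
  · have hsame : SameType o a b a c := by
      intro i
      by_cases hi : i = j
      · exact (hi ▸ hjc).symm
      · exact (hoff_ac i hi).symm
    exact ⟨b, c, hbc, hEbc, hE'.trans (hE'.symm hE'ab) ((hdef' a b a c hab hac hsame).mp hE'ab)⟩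
  · have hj : ¬ (o j a b ↔ o j p q) := by
      refine fun hj => hEab ((hdef a b p q hab hpq fun i => ?_).mpr hEpq)
      by_cases hi : i = j
      · exact hi ▸ hj
      · exact hoff i hi
    have hsame : SameType o p q a c := by
      intro i
      by_cases hi : i = j
      · subst hi
        tauto
      · exact (hoff i hi).symm.trans (hoff_ac i hi).symm
    exact absurd (hE.trans ((hdef p q a c hpq hac hsame).mp hEpq) (hE.symm hEbc)) hEab

end StrictTotalOrder

theorem exists_pair_of_fin_three {o : Fin 3 → Γ → Γ → Prop}
    [∀ i, IsStrictTotalOrder Γ (o i)] {E E' : Γ → Γ → Prop} (hom : IsHomogeneous o)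
    (hE : Equivalence E) (hE' : Equivalence E') (hdef : IsDefinable o E)
    (hdef' : IsDefinable o E') (hpairE : ∃ x y, x ≠ y ∧ E x y)
    (hpairE' : ∃ x y, x ≠ y ∧ E' x y) : ∃ x y, x ≠ y ∧ E x y ∧ E' x y := by
  obtain ⟨u, v, huv, hEuv⟩ := hpairE
  obtain ⟨a, b, hab, hE'ab⟩ := hpairE'
  by_cases hEab : E a b
  · exact ⟨a, b, hab, hEab, hE'ab⟩
  obtain ⟨j, hj | hj⟩ := Fin.exists_forall_ne_or_forall_ne_not fun i => o i a b ↔ o i u v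
  · exact exists_pair_of_sameType_off hom hE hE' hdef hdef' hab hE'ab hEab huv hEuv j hj
  · exact exists_pair_of_sameType_off hom hE hE' hdef hdef' hab hE'ab hEab huv.symm
      (hE.symm hEuv) j fun i hi => by
        rw [rel_swap_iff_not (r := o i) huv]
        exact (not_iff_comm.mp (not_iff.mp (hj i hi))).symm

end PermutationStructure

end

theorem stmt13_general {Γ : Type*} (o : Fin 3 → Γ → Γ → Prop)
    (ho : ∀ i, IsStrictTotalOrder Γ (o i))
    (hom : ∀ (A : Finset Γ) (f : Γ → Γ),
      (∀ a ∈ A, ∀ b ∈ A, ∀ i, o i a b ↔ o i (f a) (f b)) →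
      ∃ g : Γ ≃ Γ, (∀ i x y, o i x y ↔ o i (g x) (g y)) ∧ ∀ a ∈ A, g a = f a)
    (E : Γ → Γ → Prop) (hE : Equivalence E)
    (hdef : ∀ x y x' y' : Γ, x ≠ y → x' ≠ y' →
      (∀ i, o i x y ↔ o i x' y') → (E x y ↔ E x' y'))
    (hnontriv : (∃ x y, x ≠ y ∧ E x y) ∧ (∃ x y, ¬ E x y))
    (hmin : ∀ E' : Γ → Γ → Prop, Equivalence E' →
      (∀ x y x' y' : Γ, x ≠ y → x' ≠ y' →
        (∀ i, o i x y ↔ o i x' y') → (E' x y ↔ E' x' y')) →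
      (∃ x y, x ≠ y ∧ E' x y) → (∀ x y, E' x y → E x y) →
      ∀ x y, E' x y ↔ E x y) :
    ∀ E' : Γ → Γ → Prop, Equivalence E' →
      (∀ x y x' y' : Γ, x ≠ y → x' ≠ y' →
        (∀ i, o i x y ↔ o i x' y') → (E' x y ↔ E' x' y')) →
      (∃ x y, x ≠ y ∧ E' x y) → (∃ x y, ¬ E' x y) →
      ∀ x y, E x y → E' x y := by
  intro E' hE' hdef' hpair _
  exact PermutationStructure.le_of_minimal_of_exists_pair hE hE' hdef hdef' hmin
    (PermutationStructure.exists_pair_of_fin_three hom hE hE' hdef hdef' hnontriv.1 hpair)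

/-- In a homogeneous 3-dimensional permutation structure with
minimal non-trivial ∅-definable equivalence relation `E` containing `→123`,
every non-trivial ∅-definable equivalence relation `E'` (a union of 2-types)
contains `E`. -/
theorem stmt13 {Γ : Type*} (o : Fin 3 → Γ → Γ → Prop)
    (ho : ∀ i, IsStrictTotalOrder Γ (o i))
    (hom : ∀ (A : Finset Γ) (f : Γ → Γ),
      (∀ a ∈ A, ∀ b ∈ A, ∀ i, o i a b ↔ o i (f a) (f b)) →
      ∃ g : Γ ≃ Γ, (∀ i x y, o i x y ↔ o i (g x) (g y)) ∧ ∀ a ∈ A, g a = f a)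
    (E : Γ → Γ → Prop) (hE : Equivalence E)
    (hdef : ∀ x y x' y' : Γ, x ≠ y → x' ≠ y' →
      (∀ i, o i x y ↔ o i x' y') → (E x y ↔ E x' y'))
    (hnontriv : (∃ x y, x ≠ y ∧ E x y) ∧ (∃ x y, ¬ E x y))
    (hmin : ∀ E' : Γ → Γ → Prop, Equivalence E' →
      (∀ x y x' y' : Γ, x ≠ y → x' ≠ y' →
        (∀ i, o i x y ↔ o i x' y') → (E' x y ↔ E' x' y')) →
      (∃ x y, x ≠ y ∧ E' x y) → (∀ x y, E' x y → E x y) →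
      ∀ x y, E' x y ↔ E x y)
    (h123 : ∀ x y, (∀ i, o i x y) → E x y) :
    ∀ E' : Γ → Γ → Prop, Equivalence E' →
      (∀ x y x' y' : Γ, x ≠ y → x' ≠ y' →
        (∀ i, o i x y ↔ o i x' y') → (E' x y ↔ E' x' y')) →
      (∃ x y, x ≠ y ∧ E' x y) → (∃ x y, ¬ E' x y) →
      ∀ x y, E x y → E' x y :=
  stmt13_general o ho hom E hE hdef hnontriv hmin
end

section
/- Let Λ be a finite distributive lattice, E ∈ Λ meet-irreducible with E < F in Λ. Let A* be the class of finite structures (A, d, <_E) where (A,d) is a Λ-ultrametric space and <_E is a subquotient order from the relation E (i.e. d ≤ E) to the relation F (d ≤ F). Then A* has the amalgamation property: every two-point amalgamation problem A₀ ⊆ A₁ = A₀ ∪ {a₁}, A₂ = A₀ ∪ {a₂} in A* has a solution in A*. -/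
/-!
Replace the subquotient order `<_E` by its weak order `⪯_E` (`d ≤ E` or `<_E`): a preorder whose
classes are the `E`-classes and which is total exactly on `F`-classes. In `A₀ ⊕ Bool` each side
keeps its distance and preorder, the two new points get the pre-canonical distance `r`, and within
an `F`-class they are ordered by `r ≤ E` or by a path `a₁ ⪯ c ⪯ a₂` through `A₀`, ties broken
arbitrarily. Paths in both directions force `r ≤ E`; and since `E` is meet-prime in the
distributive lattice `Λ`, `r ≤ E` yields a point of `A₀` that is `E`-close to both new points.
These two facts make the glued relation transitive. If `r = ⊥` the two extensions coincide.
-/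

/-- `d` is a `Λ`-ultrametric on `A`. -/
def IsUltra {Λ A : Type*} [Lattice Λ] [OrderBot Λ] (d : A → A → Λ) : Prop :=
  (∀ x y, d x y = d y x) ∧ (∀ x y, d x y = ⊥ ↔ x = y) ∧
    (∀ x y z, d x z ≤ d x y ⊔ d y z)

/-- `lt` is (the pullback to `A` of) a subquotient order from the relation
`d ≤ E` to the relation `d ≤ F`. -/
def IsSQO {Λ A : Type*} [Lattice Λ] [OrderBot Λ] (E F : Λ)
    (d : A → A → Λ) (lt : A → A → Prop) : Prop :=
  (∀ a b, lt a b → d a b ≤ F ∧ ¬ d a b ≤ E) ∧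
  (∀ a b c, lt a b → lt b c → lt a c) ∧
  (∀ a b, lt a b → ¬ lt b a) ∧
  (∀ a a' b b', d a a' ≤ E → d b b' ≤ E → lt a b → lt a' b') ∧
  (∀ a b, d a b ≤ F → ¬ d a b ≤ E → lt a b ∨ lt b a)

open Function

section SQPreorder

variable {Λ A B : Type*} [Lattice Λ] {E F : Λ} {d : A → A → Λ}

/-- The weak order `⪯_E` of a subquotient order, axiomatised directly. -/
structure IsSQPreorder (E F : Λ) (d : A → A → Λ) (le : A → A → Prop) : Prop where
  trans : ∀ a b c, le a b → le b c → le a c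
  le_and_le_iff : ∀ a b, le a b ∧ le b a ↔ d a b ≤ E
  dist_le : ∀ a b, le a b → d a b ≤ F
  total : ∀ a b, d a b ≤ F → le a b ∨ le b a

theorem IsSQPreorder.comap {le : A → A → Prop} (h : IsSQPreorder E F d le) (f : B → A) :
    IsSQPreorder E F (fun x y => d (f x) (f y)) (fun x y => le (f x) (f y)) :=
  ⟨fun _ _ _ => h.trans _ _ _, fun _ _ => h.le_and_le_iff _ _, fun _ _ => h.dist_le _ _,
    fun _ _ => h.total _ _⟩

variable [OrderBot Λ]

theorem IsUltra.comm (hd : IsUltra d) (x y : A) : d x y = d y x := hd.1 x y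

theorem IsUltra.dist_self (hd : IsUltra d) (x : A) : d x x = ⊥ := (hd.2.1 x x).2 rfl

theorem IsUltra.dist_le_sup (hd : IsUltra d) (x y z : A) : d x z ≤ d x y ⊔ d y z := hd.2.2 x y z

theorem IsUltra.comap (hd : IsUltra d) {f : B → A} (hf : Injective f) :
    IsUltra fun x y => d (f x) (f y) :=
  ⟨fun _ _ => hd.comm _ _, fun _ _ => (hd.2.1 _ _).trans hf.eq_iff,
    fun _ _ _ => hd.dist_le_sup _ _ _⟩

namespace IsSQPreorder

variable {le : A → A → Prop}

theorem refl (h : IsSQPreorder E F d le) (hd : IsUltra d) (a : A) : le a a :=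
  ((h.le_and_le_iff a a).2 (hd.dist_self a ▸ bot_le)).1

theorem isSQO (h : IsSQPreorder E F d le) : IsSQO E F d fun a b => le a b ∧ ¬ le b a := by
  refine ⟨fun a b ⟨hab, hba⟩ =>
      ⟨h.dist_le a b hab, fun hE => hba ((h.le_and_le_iff a b).2 hE).2⟩,
    fun a b c ⟨hab, _⟩ ⟨hbc, hcb⟩ =>
      ⟨h.trans _ _ _ hab hbc, fun hca => hcb (h.trans _ _ _ hca hab)⟩,
    fun a b ⟨hab, _⟩ ⟨_, hab'⟩ => hab' hab, fun a a' b b' haa' hbb' ⟨hab, hba⟩ => ?_,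
    fun a b hF hE => ?_⟩
  · have ha := (h.le_and_le_iff a a').2 haa'
    have hb := (h.le_and_le_iff b b').2 hbb'
    exact ⟨h.trans _ _ _ ha.2 (h.trans _ _ _ hab hb.1),
      fun hba' => hba (h.trans _ _ _ hb.1 (h.trans _ _ _ hba' ha.2))⟩
  · rcases h.total a b hF with hab | hba
    · exact .inl ⟨hab, fun hba => hE ((h.le_and_le_iff a b).1 ⟨hab, hba⟩)⟩
    · exact .inr ⟨hba, fun hab => hE ((h.le_and_le_iff a b).1 ⟨hab, hba⟩)⟩

end IsSQPreorder

/-- The relation `a ⪯_E b` of a subquotient order `lt`. -/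
def SQOPre (E : Λ) (d : A → A → Λ) (lt : A → A → Prop) (a b : A) : Prop :=
  d a b ≤ E ∨ lt a b

namespace IsSQO

variable {lt : A → A → Prop}

theorem isSQPreorder (h : IsSQO E F d lt) (hd : IsUltra d) (hEF : E ≤ F) :
    IsSQPreorder E F d (SQOPre E d lt) := by
  obtain ⟨hsep, htrans, hasymm, hcongr, htotal⟩ := h
  have hself (a : A) : d a a ≤ E := hd.dist_self a ▸ bot_le
  refine ⟨fun a b c => ?_, fun a b => ⟨?_, fun hE => ⟨.inl hE, .inl (hd.comm a b ▸ hE)⟩⟩,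
    fun a b => ?_, fun a b hF => ?_⟩
  · rintro (hab | hab) (hbc | hbc)
    · exact .inl ((hd.dist_le_sup a b c).trans (sup_le hab hbc))
    · exact .inr (hcongr b a c c (hd.comm b a ▸ hab) (hself c) hbc)
    · exact .inr (hcongr a a b c (hself a) hbc hab)
    · exact .inr (htrans a b c hab hbc)
  · rintro ⟨hab | hab, hba | hba⟩
    · exact hab
    · exact hab
    · exact hd.comm a b ▸ hba
    · exact absurd hba (hasymm a b hab)
  · rintro (hab | hab)
    exacts [hab.trans hEF, (hsep a b hab).1]
  · by_cases hE : d a b ≤ E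
    · exact .inl (.inl hE)
    · exact (htotal a b hF hE).imp .inr .inr

theorem lt_iff_sqoPre (h : IsSQO E F d lt) (hd : IsUltra d) {a b : A} :
    lt a b ↔ SQOPre E d lt a b ∧ ¬ SQOPre E d lt b a := by
  refine ⟨fun hab => ⟨.inr hab, ?_⟩, ?_⟩
  · rintro (hba | hba)
    exacts [(h.1 a b hab).2 (hd.comm a b ▸ hba), h.2.2.1 a b hab hba]
  · rintro ⟨hab | hab, hba⟩
    exacts [absurd (.inl (hd.comm a b ▸ hab)) hba, hab]

end IsSQO

end SQPreorder

namespace Amalgam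

variable {Λ A₀ : Type*}

def emb (i : Bool) : A₀ ⊕ Unit → A₀ ⊕ Bool := Sum.map id fun _ => i

theorem emb_injective (i : Bool) : Injective (emb (A₀ := A₀) i) :=
  Sum.map_injective.2 ⟨injective_id, fun _ _ _ => rfl⟩

/-- Glues two relations (or distances) on the extensions along their common restriction to
`A₀`; `cross i` is the value from the new point of side `i` to that of side `!i`. -/
def glue {α : Type*} (g : Bool → A₀ ⊕ Unit → A₀ ⊕ Unit → α) (cross : Bool → α) :
    A₀ ⊕ Bool → A₀ ⊕ Bool → α
  | .inl a, .inl b => g true (.inl a) (.inl b)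
  | .inl a, .inr i => g i (.inl a) (.inr ())
  | .inr i, .inl b => g i (.inr ()) (.inl b)
  | .inr i, .inr j => if i = j then g i (.inr ()) (.inr ()) else cross i

section Glue

variable {α : Type*} {g : Bool → A₀ ⊕ Unit → A₀ ⊕ Unit → α} {cross : Bool → α}

@[simp]
theorem glue_inr_not (i : Bool) : glue g cross (.inr i) (.inr (!i)) = cross i := by
  simp [glue]

@[simp]
theorem glue_not_inr (i : Bool) : glue g cross (.inr (!i)) (.inr i) = cross (!i) := by
  simp [glue]

theorem glue_emb (hg : ∀ i a b, g i (.inl a) (.inl b) = g true (.inl a) (.inl b))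
    (i : Bool) (x y : A₀ ⊕ Unit) : glue g cross (emb i x) (emb i y) = g i x y := by
  rcases x with a | ⟨⟩ <;> rcases y with b | ⟨⟩
  · exact (hg i a b).symm
  all_goals simp [glue, emb]

end Glue

theorem forall_pair_of_emb {P : A₀ ⊕ Bool → A₀ ⊕ Bool → Prop}
    (hside : ∀ i x y, P (emb i x) (emb i y)) (hcross : ∀ i, P (.inr i) (.inr (!i))) :
    ∀ x y, P x y := by
  rintro (a | i) (b | j)
  · exact hside true (.inl a) (.inl b)
  · exact hside j (.inl a) (.inr ())
  · exact hside i (.inr ()) (.inl b)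
  · obtain rfl | rfl := Bool.eq_or_eq_not j i
    · exact hside j (.inr ()) (.inr ())
    · exact hcross i

section CrossLE

variable [Preorder Λ] {E F : Λ}

/-- `CrossLE E F r t i` says that the new point of side `i` lies weakly below that of side `!i`
when they are at distance `r`: ties inside an `F`-class are broken in favour of side `t`. -/
def CrossLE (E F r : Λ) (t i : Bool) : Prop := r ≤ E ∨ (r ≤ F ∧ i = t)

variable {r : Λ} {t i : Bool}

theorem crossLE_and_crossLE_not_iff : CrossLE E F r t i ∧ CrossLE E F r t (!i) ↔ r ≤ E := by
  cases i <;> cases t <;> simp [CrossLE] <;> tauto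

theorem CrossLE.le (hEF : E ≤ F) (h : CrossLE E F r t i) : r ≤ F :=
  h.elim (·.trans hEF) And.left

theorem crossLE_or_crossLE_not (hr : r ≤ F) : CrossLE E F r t i ∨ CrossLE E F r t (!i) := by
  cases i <;> cases t <;> simp [CrossLE, hr]

end CrossLE

section Structures

variable [Lattice Λ] [OrderBot Λ] {B C : Type*}

/-- Side `true` is `A₁ = A₀ ∪ {a₁}` and side `false` is `A₂ = A₀ ∪ {a₂}`, the new point being
`.inr ()`; `le` is the weak order `⪯_E`. -/
structure IsExtPair (E F : Λ) (d : Bool → A₀ ⊕ Unit → A₀ ⊕ Unit → Λ)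
    (le : Bool → A₀ ⊕ Unit → A₀ ⊕ Unit → Prop) : Prop where
  ultra : ∀ i, IsUltra (d i)
  sqPre : ∀ i, IsSQPreorder E F (d i) (le i)
  dist_inl : ∀ i a b, d i (.inl a) (.inl b) = d true (.inl a) (.inl b)
  le_inl : ∀ i a b, le i (.inl a) (.inl b) = le true (.inl a) (.inl b)

structure IsAmalgam (E F : Λ) (d : Bool → A₀ ⊕ Unit → A₀ ⊕ Unit → Λ)
    (le : Bool → A₀ ⊕ Unit → A₀ ⊕ Unit → Prop) (dB : B → B → Λ) (leB : B → B → Prop)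
    (f : Bool → A₀ ⊕ Unit → B) : Prop where
  ultra : IsUltra dB
  sqPre : IsSQPreorder E F dB leB
  dist_map : ∀ i x y, dB (f i x) (f i y) = d i x y
  le_map : ∀ i x y, leB (f i x) (f i y) ↔ le i x y
  map_inl : ∀ a, f true (.inl a) = f false (.inl a)

variable {E F : Λ} {d : Bool → A₀ ⊕ Unit → A₀ ⊕ Unit → Λ}
  {le : Bool → A₀ ⊕ Unit → A₀ ⊕ Unit → Prop} {dB : B → B → Λ} {leB : B → B → Prop}
  {f : Bool → A₀ ⊕ Unit → B}

theorem IsExtPair.le_inl_of_le (h : IsExtPair E F d le) {i : Bool} (j : Bool) {a b : A₀}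
    (hab : le i (.inl a) (.inl b)) : le j (.inl a) (.inl b) := by
  rwa [h.le_inl, ← h.le_inl i]

theorem IsAmalgam.comap_equiv (hB : IsAmalgam E F d le dB leB f) (e : C ≃ B) :
    IsAmalgam E F d le (fun x y => dB (e x) (e y)) (fun x y => leB (e x) (e y))
      (fun i x => e.symm (f i x)) :=
  ⟨hB.ultra.comap e.injective, hB.sqPre.comap e, by simpa using hB.dist_map,
    by simpa using hB.le_map, by simpa using hB.map_inl⟩

theorem IsAmalgam.exists_fin [Fintype B] (hB : IsAmalgam E F d le dB leB f) :
    ∃ (B' : Type) (_ : Fintype B') (dB' : B' → B' → Λ) (leB' : B' → B' → Prop)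
      (f' : Bool → A₀ ⊕ Unit → B'), IsAmalgam E F d le dB' leB' f' :=
  ⟨Fin (Fintype.card B), inferInstance, _, _, _, hB.comap_equiv (Fintype.equivFin B).symm⟩

end Structures

variable [DistribLattice Λ] [BoundedOrder Λ] {E F : Λ}

/-- The pre-canonical distance `⋀_{b ∈ A₀} (d(a₁,b) ⊔ d(a₂,b))` between the two new points. -/
def amalgDist [Fintype A₀] (d : Bool → A₀ ⊕ Unit → A₀ ⊕ Unit → Λ) : Λ :=
  Finset.univ.inf fun a => d true (.inl a) (.inr ()) ⊔ d false (.inl a) (.inr ())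

/-- A witness `c` of the paper's `a →_E b` for the new points `a` of side `i` and `b` of side
`!i`. -/
def Bridge (le : Bool → A₀ ⊕ Unit → A₀ ⊕ Unit → Prop) (i : Bool) : Prop :=
  ∃ c, le i (.inr ()) (.inl c) ∧ le (!i) (.inl c) (.inr ())

variable [Fintype A₀] {d : Bool → A₀ ⊕ Unit → A₀ ⊕ Unit → Λ}
  {le : Bool → A₀ ⊕ Unit → A₀ ⊕ Unit → Prop}

theorem amalgDist_le_sup (i : Bool) (a : A₀) :
    amalgDist d ≤ d i (.inl a) (.inr ()) ⊔ d (!i) (.inl a) (.inr ()) := by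
  cases i
  · exact (Finset.inf_le (Finset.mem_univ a)).trans (sup_comm _ _).le
  · exact Finset.inf_le (Finset.mem_univ a)

theorem exists_dist_le_of_amalgDist_le (hE : InfIrred E) (hr : amalgDist d ≤ E) :
    ∃ c, ∀ i, d i (.inl c) (.inr ()) ≤ E := by
  obtain ⟨c, -, hc⟩ := (infPrime_iff_infIrred.2 hE).finset_inf_le.1 hr
  exact ⟨c, fun i => by cases i; exacts [le_sup_right.trans hc, le_sup_left.trans hc]⟩

namespace IsExtPair

variable (h : IsExtPair E F d le)
include h

/-- The triangle inequality through the points of `A₀`, on which `d i` and `d j` agree. -/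
theorem dist_new_le (i j : Bool) (a : A₀) :
    d i (.inl a) (.inr ()) ≤ amalgDist d ⊔ d j (.inl a) (.inr ()) := by
  rw [amalgDist, Finset.inf_sup_distrib_right]
  refine Finset.le_inf fun c _ => ?_
  have hc (k : Bool) :
      d k (.inl c) (.inr ()) ≤ d true (.inl c) (.inr ()) ⊔ d false (.inl c) (.inr ()) := by
    cases k
    exacts [le_sup_right, le_sup_left]
  have hi := (h.ultra i).dist_le_sup (.inl a) (.inl c) (.inr ())
  have hj := (h.ultra j).dist_le_sup (.inl a) (.inr ()) (.inl c)
  rw [h.dist_inl i, ← h.dist_inl j] at hi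
  rw [(h.ultra j).comm (.inr ())] at hj
  exact hi.trans (sup_le (hj.trans (sup_le le_sup_right ((hc j).trans le_sup_left)))
    ((hc i).trans le_sup_left))

/-- Bridges in both directions squeeze both new points into the `E`-class of the bridging point. -/
theorem amalgDist_le_of_bridge (h₁ : Bridge le true) (h₂ : Bridge le false) :
    amalgDist d ≤ E := by
  obtain ⟨c, huc, hcu'⟩ := h₁
  obtain ⟨c', huc', hc'u⟩ := h₂
  have hcc' : le true (.inl c) (.inl c') :=
    h.le_inl_of_le true ((h.sqPre false).trans _ _ _ hcu' huc')
  have hc'c : le false (.inl c') (.inl c) :=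
    h.le_inl_of_le false ((h.sqPre true).trans _ _ _ hc'u huc)
  have h1 : d true (.inl c) (.inr ()) ≤ E :=
    ((h.sqPre true).le_and_le_iff _ _).1 ⟨(h.sqPre true).trans _ _ _ hcc' hc'u, huc⟩
  have h2 : d false (.inl c) (.inr ()) ≤ E :=
    ((h.sqPre false).le_and_le_iff _ _).1 ⟨hcu', (h.sqPre false).trans _ _ _ huc' hc'c⟩
  exact (amalgDist_le_sup true c).trans (sup_le h1 h2)

theorem exists_tieBreak : ∃ t : Bool, ∀ i, Bridge le i → ¬ amalgDist d ≤ E → i = t := by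
  by_cases hb : Bridge le true
  · refine ⟨true, fun i hi hr => ?_⟩
    cases i
    exacts [absurd (h.amalgDist_le_of_bridge hb hi) hr, rfl]
  · refine ⟨false, fun i hi _ => ?_⟩
    cases i
    exacts [rfl, absurd hi hb]

theorem isUltra_glue (hr : amalgDist d ≠ ⊥) : IsUltra (glue d fun _ => amalgDist d) := by
  set D := glue d fun _ => amalgDist d
  have side (i : Bool) (x y z : A₀ ⊕ Unit) :
      D (emb i x) (emb i z) ≤ D (emb i x) (emb i y) ⊔ D (emb i y) (emb i z) := by
    simp only [D, glue_emb h.dist_inl]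
    exact (h.ultra i).dist_le_sup x y z
  refine ⟨forall_pair_of_emb (fun i x y => ?_) (fun i => by simp [D]),
    forall_pair_of_emb (fun i x y => ?_) (fun i => by simp [D, hr]), ?_⟩
  · simp only [D, glue_emb h.dist_inl]
    exact (h.ultra i).comm x y
  · simp only [D, glue_emb h.dist_inl, (emb_injective i).eq_iff]
    exact (h.ultra i).2.1 x y
  rintro (a | i) (b | j) (c | k)
  · exact side true (.inl a) (.inl b) (.inl c)
  · exact side k (.inl a) (.inl b) (.inr ())
  · exact side j (.inl a) (.inr ()) (.inl c)
  · obtain rfl | rfl := Bool.eq_or_eq_not k j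
    · exact side k (.inl a) (.inr ()) (.inr ())
    · simp only [D, glue_inr_not]
      exact (h.dist_new_le (!j) j a).trans (sup_comm _ _).le
  · exact side i (.inr ()) (.inl b) (.inl c)
  · obtain rfl | rfl := Bool.eq_or_eq_not k i
    · exact side k (.inr ()) (.inl b) (.inr ())
    · simp only [D, glue_inr_not]
      change _ ≤ d i (.inr ()) (.inl b) ⊔ d (!i) (.inl b) (.inr ())
      rw [(h.ultra i).comm]
      exact amalgDist_le_sup i b
  · obtain rfl | rfl := Bool.eq_or_eq_not j i
    · exact side j (.inr ()) (.inr ()) (.inl c)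
    · simp only [D, glue_inr_not]
      change d i (.inr ()) (.inl c) ≤ _ ⊔ d (!i) (.inr ()) (.inl c)
      rw [(h.ultra i).comm, (h.ultra (!i)).comm]
      exact h.dist_new_le i (!i) c
  · obtain rfl | rfl := Bool.eq_or_eq_not j i
    · exact le_sup_right
    obtain rfl | rfl := Bool.eq_or_eq_not k i
    · simp [D, glue, (h.ultra k).dist_self]
    · exact le_sup_left

theorem crossLE_of_bridge {t : Bool} (ht : ∀ i, Bridge le i → ¬ amalgDist d ≤ E → i = t)
    {i : Bool} (hb : Bridge le i) : CrossLE E F (amalgDist d) t i := by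
  by_cases hr : amalgDist d ≤ E
  · exact .inl hr
  obtain ⟨c, huc, hcu⟩ := hb
  have hdi := (h.ultra i).comm (.inl c) (.inr ()) ▸ (h.sqPre i).dist_le _ _ huc
  exact .inr ⟨(amalgDist_le_sup i c).trans (sup_le hdi ((h.sqPre (!i)).dist_le _ _ hcu)),
    ht i ⟨c, huc, hcu⟩ hr⟩

variable (hE : InfIrred E)
include hE

/-- Once the new points are `E`-close, an `E`-close point of `A₀` links them. -/
theorem le_new_of_amalgDist_le (hr : amalgDist d ≤ E) {i : Bool} (j : Bool) {c : A₀}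
    (hc : le i (.inl c) (.inr ())) : le j (.inl c) (.inr ()) := by
  obtain ⟨c', hc'⟩ := exists_dist_le_of_amalgDist_le hE hr
  have hcc' : le i (.inl c) (.inl c') :=
    (h.sqPre i).trans _ _ _ hc (((h.sqPre i).le_and_le_iff _ _).2 (hc' i)).2
  exact (h.sqPre j).trans _ _ _ (h.le_inl_of_le j hcc')
    (((h.sqPre j).le_and_le_iff _ _).2 (hc' j)).1

theorem new_le_of_amalgDist_le (hr : amalgDist d ≤ E) {i : Bool} (j : Bool) {c : A₀}
    (hc : le i (.inr ()) (.inl c)) : le j (.inr ()) (.inl c) := by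
  obtain ⟨c', hc'⟩ := exists_dist_le_of_amalgDist_le hE hr
  have hc'c : le i (.inl c') (.inl c) :=
    (h.sqPre i).trans _ _ _ (((h.sqPre i).le_and_le_iff _ _).2 (hc' i)).1 hc
  exact (h.sqPre j).trans _ _ _ (((h.sqPre j).le_and_le_iff _ _).2 (hc' j)).2
    (h.le_inl_of_le j hc'c)

/-- Distance `⊥` between the new points forces the two extensions to coincide. -/
theorem isAmalgam_of_amalgDist_eq_bot (hr : amalgDist d = ⊥) :
    IsAmalgam E F d le (d true) (le true) fun _ => id := by
  have hnew (i j : Bool) (a : A₀) : d i (.inl a) (.inr ()) ≤ d j (.inl a) (.inr ()) := by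
    simpa [hr] using h.dist_new_le i j a
  have hrE : amalgDist d ≤ E := hr ▸ bot_le
  refine ⟨h.ultra true, h.sqPre true, ?_, ?_, fun _ => rfl⟩
  · rintro i (a | ⟨⟩) (b | ⟨⟩)
    · exact (h.dist_inl i a b).symm
    · exact le_antisymm (hnew _ _ a) (hnew _ _ a)
    · rw [(h.ultra true).comm, (h.ultra i).comm]
      exact le_antisymm (hnew _ _ b) (hnew _ _ b)
    · rw [id, (h.ultra true).dist_self, (h.ultra i).dist_self]
  · rintro i (a | ⟨⟩) (b | ⟨⟩)
    · exact (h.le_inl i a b).symm.to_iff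
    · exact ⟨h.le_new_of_amalgDist_le hE hrE i, h.le_new_of_amalgDist_le hE hrE true⟩
    · exact ⟨h.new_le_of_amalgDist_le hE hrE i, h.new_le_of_amalgDist_le hE hrE true⟩
    · exact iff_of_true ((h.sqPre true).refl (h.ultra true) _) ((h.sqPre i).refl (h.ultra i) _)

section TieBreak

variable {t : Bool} (ht : ∀ i, Bridge le i → ¬ amalgDist d ≤ E → i = t)
include ht

theorem le_new_of_crossLE {i : Bool} {c : A₀} (hc : le i (.inl c) (.inr ()))
    (hx : CrossLE E F (amalgDist d) t i) : le (!i) (.inl c) (.inr ()) := by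
  by_cases hr : amalgDist d ≤ E
  · exact h.le_new_of_amalgDist_le hE hr (!i) hc
  obtain ⟨hF, rfl⟩ := hx.resolve_left hr
  have hd := (h.dist_new_le (!i) i c).trans (sup_le hF ((h.sqPre i).dist_le _ _ hc))
  -- the opposite comparison would be a bridge from side `!i`, which loses the tie-break
  refine ((h.sqPre (!i)).total _ _ hd).resolve_right fun huc => ?_
  exact Bool.not_ne_self i (ht (!i) ⟨c, huc, by rwa [Bool.not_not]⟩ hr)

theorem new_le_of_crossLE {i : Bool} {c : A₀} (hx : CrossLE E F (amalgDist d) t i)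
    (hc : le (!i) (.inr ()) (.inl c)) : le i (.inr ()) (.inl c) := by
  by_cases hr : amalgDist d ≤ E
  · exact h.new_le_of_amalgDist_le hE hr i hc
  obtain ⟨hF, rfl⟩ := hx.resolve_left hr
  have hdi := (h.ultra (!i)).comm (.inr ()) (.inl c) ▸ (h.sqPre (!i)).dist_le _ _ hc
  have hd := (h.ultra i).comm (.inl c) (.inr ()) ▸
    (h.dist_new_le i (!i) c).trans (sup_le hF hdi)
  refine ((h.sqPre i).total _ _ hd).resolve_right fun hcu => ?_
  exact Bool.not_ne_self i (ht (!i) ⟨c, hc, by rwa [Bool.not_not]⟩ hr)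

theorem glue_le_trans (x y z : A₀ ⊕ Bool) :
    glue le (CrossLE E F (amalgDist d) t) x y → glue le (CrossLE E F (amalgDist d) t) y z →
      glue le (CrossLE E F (amalgDist d) t) x z := by
  set G := glue le (CrossLE E F (amalgDist d) t)
  have side (i : Bool) (x y z : A₀ ⊕ Unit) :
      G (emb i x) (emb i y) → G (emb i y) (emb i z) → G (emb i x) (emb i z) := by
    simp only [G, glue_emb h.le_inl]
    exact (h.sqPre i).trans x y z
  have refl (i : Bool) (x : A₀ ⊕ Unit) : G (emb i x) (emb i x) := by
    simp only [G, glue_emb h.le_inl]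
    exact (h.sqPre i).refl (h.ultra i) x
  rcases x with a | i <;> rcases y with b | j <;> rcases z with c | k
  · exact side true (.inl a) (.inl b) (.inl c)
  · exact side k (.inl a) (.inl b) (.inr ())
  · exact side j (.inl a) (.inr ()) (.inl c)
  · obtain rfl | rfl := Bool.eq_or_eq_not k j
    · exact side k (.inl a) (.inr ()) (.inr ())
    · simp only [G, glue_inr_not]
      exact h.le_new_of_crossLE hE ht
  · exact side i (.inr ()) (.inl b) (.inl c)
  · obtain rfl | rfl := Bool.eq_or_eq_not k i
    · exact side k (.inr ()) (.inl b) (.inr ())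
    · simp only [G, glue_inr_not]
      exact fun hib hbk => h.crossLE_of_bridge ht ⟨b, hib, hbk⟩
  · obtain rfl | rfl := Bool.eq_or_eq_not j i
    · exact side j (.inr ()) (.inr ()) (.inl c)
    · simp only [G, glue_inr_not]
      exact h.new_le_of_crossLE hE ht
  · obtain rfl | rfl := Bool.eq_or_eq_not j i
    · exact fun _ hjk => hjk
    obtain rfl | rfl := Bool.eq_or_eq_not k i
    · exact fun _ _ => refl k (.inr ())
    · exact fun hij _ => hij

variable (hEF : E ≤ F)
include hEF

theorem isSQPreorder_glue :
    IsSQPreorder E F (glue d fun _ => amalgDist d) (glue le (CrossLE E F (amalgDist d) t)) := by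
  refine ⟨h.glue_le_trans hE ht, forall_pair_of_emb (fun i x y => ?_) (fun i => ?_),
    forall_pair_of_emb (fun i x y => ?_) (fun i => ?_),
    forall_pair_of_emb (fun i x y => ?_) (fun i => ?_)⟩ <;>
    simp only [glue_emb h.le_inl, glue_emb h.dist_inl, glue_inr_not, glue_not_inr]
  · exact (h.sqPre i).le_and_le_iff x y
  · exact crossLE_and_crossLE_not_iff
  · exact (h.sqPre i).dist_le x y
  · exact CrossLE.le hEF
  · exact (h.sqPre i).total x y
  · exact crossLE_or_crossLE_not

theorem isAmalgam_glue (hr : amalgDist d ≠ ⊥) :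
    IsAmalgam E F d le (glue d fun _ => amalgDist d) (glue le (CrossLE E F (amalgDist d) t))
      emb :=
  ⟨h.isUltra_glue hr, h.isSQPreorder_glue hE ht hEF, glue_emb h.dist_inl,
    fun i x y => (glue_emb h.le_inl i x y).to_iff, fun _ => rfl⟩

end TieBreak

theorem exists_isAmalgam (hEF : E ≤ F) :
    ∃ (B : Type) (_ : Fintype B) (dB : B → B → Λ) (leB : B → B → Prop)
      (f : Bool → A₀ ⊕ Unit → B), IsAmalgam E F d le dB leB f := by
  by_cases hr : amalgDist d = ⊥
  · exact (h.isAmalgam_of_amalgDist_eq_bot hE hr).exists_fin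
  · obtain ⟨t, ht⟩ := h.exists_tieBreak
    exact (h.isAmalgam_glue hE ht hEF hr).exists_fin

end IsExtPair

end Amalgam

theorem stmt14_general {Λ A₀ : Type*} [DistribLattice Λ] [BoundedOrder Λ]
    [Fintype A₀]
    (E F : Λ) (hEF : E < F)
    (hirr : ∀ x y : Λ, E = x ⊓ y → E = x ∨ E = y)
    (d₁ d₂ : (A₀ ⊕ Unit) → (A₀ ⊕ Unit) → Λ)
    (lt₁ lt₂ : (A₀ ⊕ Unit) → (A₀ ⊕ Unit) → Prop)
    (h₁ : IsUltra d₁ ∧ IsSQO E F d₁ lt₁)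
    (h₂ : IsUltra d₂ ∧ IsSQO E F d₂ lt₂)
    (hagree_d : ∀ a b : A₀, d₁ (Sum.inl a) (Sum.inl b) = d₂ (Sum.inl a) (Sum.inl b))
    (hagree_lt : ∀ a b : A₀, lt₁ (Sum.inl a) (Sum.inl b) ↔ lt₂ (Sum.inl a) (Sum.inl b)) :
    ∃ (B : Type) (_ : Fintype B) (d : B → B → Λ) (lt : B → B → Prop)
      (f₁ f₂ : (A₀ ⊕ Unit) → B),
      IsUltra d ∧ IsSQO E F d lt ∧
      (∀ x y, d (f₁ x) (f₁ y) = d₁ x y) ∧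
      (∀ x y, lt (f₁ x) (f₁ y) ↔ lt₁ x y) ∧
      (∀ x y, d (f₂ x) (f₂ y) = d₂ x y) ∧
      (∀ x y, lt (f₂ x) (f₂ y) ↔ lt₂ x y) ∧
      (∀ a : A₀, f₁ (Sum.inl a) = f₂ (Sum.inl a)) := by
  let d (i : Bool) := cond i d₁ d₂
  let lt (i : Bool) := cond i lt₁ lt₂
  have hd : ∀ i, IsUltra (d i) ∧ IsSQO E F (d i) (lt i) := Bool.forall_bool.2 ⟨h₂, h₁⟩
  have hext : Amalgam.IsExtPair E F d fun i => SQOPre E (d i) (lt i) :=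
    ⟨fun i => (hd i).1, fun i => (hd i).2.isSQPreorder (hd i).1 hEF.le,
      by rintro (_ | _) a b; exacts [(hagree_d a b).symm, rfl],
      by rintro (_ | _) a b; exacts [by simp [d, lt, SQOPre, hagree_d, hagree_lt], rfl]⟩
  have hE : InfIrred E :=
    ⟨not_isMax_of_lt hEF, fun x y hxy => (hirr x y hxy.symm).imp Eq.symm Eq.symm⟩
  obtain ⟨B, _, dB, leB, f, hB⟩ := hext.exists_isAmalgam hE hEF.le
  have hlt (i x y) : (leB (f i x) (f i y) ∧ ¬ leB (f i y) (f i x)) ↔ lt i x y := by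
    rw [hB.le_map, hB.le_map, (hd i).2.lt_iff_sqoPre (hd i).1]
  exact ⟨B, inferInstance, dB, _, f true, f false, hB.ultra, hB.sqPre.isSQO, hB.dist_map true,
    hlt true, hB.dist_map false, hlt false, hB.map_inl⟩

/-- The class of finite `Λ`-ultrametric spaces equipped with a
subquotient order from a meet-irreducible `E` to `F` has the two-point
amalgamation property: any two one-point extensions `A₁ = A₀ ∪ {a₁}`,
`A₂ = A₀ ∪ {a₂}` of a common base `A₀` (modelled as `A₀ ⊕ Unit`, agreeing on
`A₀`) admit a common extension `B` in the class. -/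
theorem stmt14 {Λ A₀ : Type*} [DistribLattice Λ] [BoundedOrder Λ] [Fintype Λ]
    [Fintype A₀]
    (E F : Λ) (hEF : E < F)
    (hirr : ∀ x y : Λ, E = x ⊓ y → E = x ∨ E = y)
    (d₁ d₂ : (A₀ ⊕ Unit) → (A₀ ⊕ Unit) → Λ)
    (lt₁ lt₂ : (A₀ ⊕ Unit) → (A₀ ⊕ Unit) → Prop)
    (h₁ : IsUltra d₁ ∧ IsSQO E F d₁ lt₁)
    (h₂ : IsUltra d₂ ∧ IsSQO E F d₂ lt₂)
    (hagree_d : ∀ a b : A₀, d₁ (Sum.inl a) (Sum.inl b) = d₂ (Sum.inl a) (Sum.inl b))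
    (hagree_lt : ∀ a b : A₀, lt₁ (Sum.inl a) (Sum.inl b) ↔ lt₂ (Sum.inl a) (Sum.inl b)) :
    ∃ (B : Type) (_ : Fintype B) (d : B → B → Λ) (lt : B → B → Prop)
      (f₁ f₂ : (A₀ ⊕ Unit) → B),
      IsUltra d ∧ IsSQO E F d lt ∧
      (∀ x y, d (f₁ x) (f₁ y) = d₁ x y) ∧
      (∀ x y, lt (f₁ x) (f₁ y) ↔ lt₁ x y) ∧
      (∀ x y, d (f₂ x) (f₂ y) = d₂ x y) ∧
      (∀ x y, lt (f₂ x) (f₂ y) ↔ lt₂ x y) ∧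
      (∀ a : A₀, f₁ (Sum.inl a) = f₂ (Sum.inl a)) :=
  stmt14_general E F hEF hirr d₁ d₂ lt₁ lt₂ h₁ h₂ hagree_d hagree_lt
end

section
/- In the setting of amalgamating a subquotient order <_E from E to F over a base A₀ with extension points a₁, a₂ (where E is meet-irreducible in a finite distributive lattice Λ and d(a₁,a₂) is determined by pre-canonical amalgamation): if d(a₁,a₂) ∈ (E, F], then defining a →E b as ∃x ∈ A₀ (a ⪯_E x ⪯_E b) ∧ d(a,b) ≰ E, it cannot be that both a₁ →E a₂ and a₂ →E a₁ hold. -/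
/-- The relation `⪯_E` of a subquotient order `lt`. -/
def SQOLe {Λ A : Type*} [LE Λ] (E : Λ) (d : A → A → Λ) (lt : A → A → Prop) (a b : A) : Prop :=
  d a b ≤ E ∨ lt a b

lemma IsUltra.dist_self_le {Λ A : Type*} [Lattice Λ] [OrderBot Λ] {d : A → A → Λ}
    (hU : IsUltra d) {E : Λ} (a : A) : d a a ≤ E :=
  ((hU.2.1 a a).2 rfl).trans_le bot_le

namespace IsSQO

variable {Λ A : Type*} [Lattice Λ] [OrderBot Λ] {E F : Λ} {d : A → A → Λ}
  {lt : A → A → Prop} {a b c : A}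

lemma lt_of_sqoLe_of_lt (hS : IsSQO E F d lt) (hU : IsUltra d)
    (hab : SQOLe E d lt a b) (hbc : lt b c) : lt a c := by
  rcases hab with hab | hab
  · exact hS.2.2.2.1 b a c c (hU.1 a b ▸ hab) (hU.dist_self_le c) hbc
  · exact hS.2.1 a b c hab hbc

lemma lt_of_lt_of_sqoLe (hS : IsSQO E F d lt) (hU : IsUltra d)
    (hab : lt a b) (hbc : SQOLe E d lt b c) : lt a c := by
  rcases hbc with hbc | hbc
  · exact hS.2.2.2.1 a a b c (hU.dist_self_le a) hbc hab
  · exact hS.2.1 a b c hab hbc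

lemma sqoLe_trans (hS : IsSQO E F d lt) (hU : IsUltra d)
    (hab : SQOLe E d lt a b) (hbc : SQOLe E d lt b c) : SQOLe E d lt a c := by
  rcases hbc with hbc | hbc
  · rcases hab with hab | hab
    · exact .inl ((hU.2.2 a b c).trans (sup_le hab hbc))
    · exact .inr (hS.lt_of_lt_of_sqoLe hU hab (.inl hbc))
  · exact .inr (hS.lt_of_sqoLe_of_lt hU hab hbc)

lemma sqoLe_antisymm (hS : IsSQO E F d lt) (hU : IsUltra d)
    (hab : SQOLe E d lt a b) (hba : SQOLe E d lt b a) : d a b ≤ E := by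
  rcases hab with hab | hab
  · exact hab
  rcases hba with hba | hba
  · exact hU.1 a b ▸ hba
  · exact absurd hba (hS.2.2.1 a b hab)

lemma dist_le_of_sqoLe_between (hS : IsSQO E F d lt) (hU : IsUltra d)
    (hab : SQOLe E d lt a b) (hbc : SQOLe E d lt b c) (hac : d a c ≤ E) :
    d a b ≤ E ∧ d b c ≤ E := by
  have not_lt : ¬ lt a c := fun h => (hS.1 a c h).2 hac
  refine ⟨?_, ?_⟩
  · by_contra h
    exact not_lt (hS.lt_of_lt_of_sqoLe hU (hab.resolve_left h) hbc)
  · by_contra h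
    exact not_lt (hS.lt_of_sqoLe_of_lt hU hab (hbc.resolve_left h))

lemma dist_le_of_sqoLe_cycle (hS : IsSQO E F d lt) (hU : IsUltra d)
    (hab : SQOLe E d lt a b) (hbc : SQOLe E d lt b c) (hca : SQOLe E d lt c a) :
    d a b ≤ E ∧ d b c ≤ E :=
  hS.dist_le_of_sqoLe_between hU hab hbc
    (hS.sqoLe_antisymm hU (hS.sqoLe_trans hU hab hbc) hca)

end IsSQO

theorem stmt15_general {Λ A₀ : Type*} [DistribLattice Λ] [BoundedOrder Λ]
    [Fintype A₀]
    (E F : Λ)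
    (d : (A₀ ⊕ Bool) → (A₀ ⊕ Bool) → Λ)
    (lt : (A₀ ⊕ Bool) → (A₀ ⊕ Bool) → Prop)
    -- the first factor A₁ = A₀ ∪ {a₁} is an ultrametric space with subquotient order
    (h₁ : IsUltra (fun x y : {z : A₀ ⊕ Bool // z ≠ Sum.inr true} => d x.1 y.1) ∧
      IsSQO E F (fun x y : {z : A₀ ⊕ Bool // z ≠ Sum.inr true} => d x.1 y.1)
        (fun x y => lt x.1 y.1))
    -- the second factor A₂ = A₀ ∪ {a₂} likewise
    (h₂ : IsUltra (fun x y : {z : A₀ ⊕ Bool // z ≠ Sum.inr false} => d x.1 y.1) ∧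
      IsSQO E F (fun x y : {z : A₀ ⊕ Bool // z ≠ Sum.inr false} => d x.1 y.1)
        (fun x y => lt x.1 y.1))
    -- pre-canonical amalgamation
    (hpc : d (Sum.inr false) (Sum.inr true) =
      (Finset.univ : Finset A₀).inf
        (fun b => d (Sum.inr false) (Sum.inl b) ⊔ d (Sum.inr true) (Sum.inl b)))
    (ple : (A₀ ⊕ Bool) → (A₀ ⊕ Bool) → Prop)
    (hple : ∀ a b, ple a b ↔ d a b ≤ E ∨ lt a b)
    (arrow : (A₀ ⊕ Bool) → (A₀ ⊕ Bool) → Prop)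
    (harrow : ∀ a b, arrow a b ↔
      (∃ x : A₀, ple a (Sum.inl x) ∧ ple (Sum.inl x) b) ∧ ¬ d a b ≤ E) :
    ¬ (arrow (Sum.inr false) (Sum.inr true) ∧
        arrow (Sum.inr true) (Sum.inr false)) := by
  rintro ⟨h₁₂, h₂₁⟩
  obtain ⟨⟨x₁, ha₁x₁, hx₁a₂⟩, hd⟩ := (harrow _ _).1 h₁₂
  obtain ⟨⟨x₂, ha₂x₂, hx₂a₁⟩, -⟩ := (harrow _ _).1 h₂₁
  rw [hple] at ha₁x₁ hx₁a₂ ha₂x₂ hx₂a₁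
  let a₁ : {z : A₀ ⊕ Bool // z ≠ Sum.inr true} := ⟨Sum.inr false, by simp⟩
  let a₂ : {z : A₀ ⊕ Bool // z ≠ Sum.inr false} := ⟨Sum.inr true, by simp⟩
  let y₁ (x : A₀) : {z : A₀ ⊕ Bool // z ≠ Sum.inr true} := ⟨Sum.inl x, Sum.inl_ne_inr⟩
  let y₂ (x : A₀) : {z : A₀ ⊕ Bool // z ≠ Sum.inr false} := ⟨Sum.inl x, Sum.inl_ne_inr⟩
  have hx₂x₁ := h₁.2.sqoLe_trans h₁.1 (a := y₁ x₂) (b := a₁) (c := y₁ x₁) hx₂a₁ ha₁x₁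
  have hx₁x₂ := h₂.2.sqoLe_trans h₂.1 (a := y₂ x₁) (b := a₂) (c := y₂ x₂) hx₁a₂ ha₂x₂
  have hdx₂a₁ := (h₁.2.dist_le_of_sqoLe_cycle h₁.1 (a := y₁ x₂) (b := a₁) (c := y₁ x₁)
    hx₂a₁ ha₁x₁ hx₁x₂).1
  have hda₂x₂ := (h₂.2.dist_le_of_sqoLe_cycle h₂.1 (a := y₂ x₁) (b := a₂) (c := y₂ x₂)
    hx₁a₂ ha₂x₂ hx₂x₁).2
  have hda₁x₂ : d (Sum.inr false) (Sum.inl x₂) ≤ E := (h₁.1.1 a₁ (y₁ x₂)).trans_le hdx₂a₁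
  refine hd (le_trans ?_ (sup_le hda₁x₂ hda₂x₂))
  rw [hpc]
  exact Finset.inf_le (Finset.mem_univ x₂)

/-- In the amalgamation of a subquotient order `<_E` from a
meet-irreducible `E` to `F` over a base `A₀` with extension points
`a₁ = Sum.inr false`, `a₂ = Sum.inr true`, with `d(a₁,a₂)` given by
pre-canonical amalgamation and lying in the interval `(E,F]`, the relation
`a →E b := (∃ x ∈ A₀, a ⪯_E x ⪯_E b) ∧ d(a,b) ≰ E` (where
`a ⪯_E b ↔ d(a,b) ≤ E ∨ a <_E b`) cannot hold in both directions between
`a₁` and `a₂`. -/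
theorem stmt15 {Λ A₀ : Type*} [DistribLattice Λ] [BoundedOrder Λ] [Fintype Λ]
    [Fintype A₀]
    (E F : Λ) (hEF : E < F)
    (hirr : ∀ x y : Λ, E = x ⊓ y → E = x ∨ E = y)
    (d : (A₀ ⊕ Bool) → (A₀ ⊕ Bool) → Λ)
    (lt : (A₀ ⊕ Bool) → (A₀ ⊕ Bool) → Prop)
    -- the first factor A₁ = A₀ ∪ {a₁} is an ultrametric space with subquotient order
    (h₁ : IsUltra (fun x y : {z : A₀ ⊕ Bool // z ≠ Sum.inr true} => d x.1 y.1) ∧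
      IsSQO E F (fun x y : {z : A₀ ⊕ Bool // z ≠ Sum.inr true} => d x.1 y.1)
        (fun x y => lt x.1 y.1))
    -- the second factor A₂ = A₀ ∪ {a₂} likewise
    (h₂ : IsUltra (fun x y : {z : A₀ ⊕ Bool // z ≠ Sum.inr false} => d x.1 y.1) ∧
      IsSQO E F (fun x y : {z : A₀ ⊕ Bool // z ≠ Sum.inr false} => d x.1 y.1)
        (fun x y => lt x.1 y.1))
    -- pre-canonical amalgamation
    (hpc : d (Sum.inr false) (Sum.inr true) =
      (Finset.univ : Finset A₀).inf
        (fun b => d (Sum.inr false) (Sum.inl b) ⊔ d (Sum.inr true) (Sum.inl b)))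
    -- d(a₁,a₂) ∈ (E, F]
    (hin : E < d (Sum.inr false) (Sum.inr true) ∧
      d (Sum.inr false) (Sum.inr true) ≤ F)
    (ple : (A₀ ⊕ Bool) → (A₀ ⊕ Bool) → Prop)
    (hple : ∀ a b, ple a b ↔ d a b ≤ E ∨ lt a b)
    (arrow : (A₀ ⊕ Bool) → (A₀ ⊕ Bool) → Prop)
    (harrow : ∀ a b, arrow a b ↔
      (∃ x : A₀, ple a (Sum.inl x) ∧ ple (Sum.inl x) b) ∧ ¬ d a b ≤ E) :
    ¬ (arrow (Sum.inr false) (Sum.inr true) ∧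
        arrow (Sum.inr true) (Sum.inr false)) :=
  stmt15_general E F d lt h₁ h₂ hpc ple hple arrow harrow
end
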